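/- arXiv:2201.01980 — 7 statements merged into one kernel-verified Lean document; each statement's English description precedes it below -/
import Mathlib

section
/- Let (A_m)_{m∈ℕ} be a sequence of essential partitions of M̄ and let F : M̄ × M̄ → ℝ be a bounded measurable function such that ∑_{A,B ∈ A_m} μ̄(A)·μ̄(B)·( sup_{A×B} F − inf_{A×B} F ) → 0 as m → ∞. Then for μ̄-almost every x ∈ M̄, (1/n²)·∑_{0 ≤ i,j ≤ n−1} F(T̄^i x, T̄^j x) converges, as n → ∞, to ∫_{M̄×M̄} F(x,y) dμ̄(x) dμ̄(y). -/
/-!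
Birkhoff's ergodic theorem for bounded functions (via Garsia's maximal inequality) shows that
for a.e. `x` the orbit of `x` visits every cell `A` of every partition `𝒜_m` with
frequency `μ(A)`. On `A × B` the function `F` lies between `inf_{A×B} F` and `sup_{A×B} F`, so
the double orbit average of `F` is squeezed between the double orbit averages of these two step
functions. Those are bilinear in the visit frequencies, which converge in `ℓ¹` by Scheffé's
lemma; hence they tend to `∑ μ(A) μ(B) inf_{A×B} F ≤ ∫ F` and to `∑ μ(A) μ(B) sup_{A×B} F ≥ ∫ F`,
and the gap between these two sums is the quantity assumed to tend to `0` as `m → ∞`.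
-/

open MeasureTheory Filter Topology Function
open scoped Finset

theorem Filter.limsup_le_limsup_of_tendsto_sub {ι : Type*} {l : Filter ι} [l.NeBot]
    {u v : ι → ℝ} (hv : IsBoundedUnder (· ≤ ·) l v) (hv' : IsBoundedUnder (· ≥ ·) l v)
    (h : Tendsto (fun i => u i - v i) l (𝓝 0)) : limsup u l ≤ limsup v l :=
  have h : Tendsto (u - v) l (𝓝 0) := h
  calc limsup u l = limsup (v + (u - v)) l := by rw [add_sub_cancel]
    _ ≤ limsup v l + limsup (u - v) l :=
      limsup_add_le hv' hv h.isCoboundedUnder_le h.isBoundedUnder_le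
    _ = limsup v l := by rw [h.limsup_eq, add_zero]

lemma eventually_abs_sub_lt_of_le_of_le {κ : Type*} {l : Filter κ} {lo u hi : κ → ℝ}
    {a b L ε : ℝ} (hlo : ∀ n, lo n ≤ u n) (hhi : ∀ n, u n ≤ hi n) (ha : Tendsto lo l (𝓝 a))
    (hb : Tendsto hi l (𝓝 b)) (haL : a ≤ L) (hLb : L ≤ b) (hε : 0 < ε) :
    ∀ᶠ n in l, |u n - L| < b - a + ε := by
  filter_upwards [ha.eventually_const_lt (sub_lt_self a hε),
    hb.eventually_lt_const (lt_add_of_pos_right b hε)] with n h₁ h₂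
  rw [abs_sub_lt_iff]
  constructor <;> linarith [hlo n, hhi n]

lemma tendsto_of_forall_eventually_abs_sub_lt {κ ι : Type*} {l : Filter κ} {l' : Filter ι}
    [l'.NeBot] {u : κ → ℝ} {L : ℝ} {δ : ι → ℝ} (hδ : Tendsto δ l' (𝓝 0))
    (h : ∀ m, ∀ ε > 0, ∀ᶠ n in l, |u n - L| < δ m + ε) : Tendsto u l (𝓝 L) := by
  refine Metric.tendsto_nhds.2 fun ε hε => ?_
  obtain ⟨m, hm⟩ := (hδ.eventually (gt_mem_nhds (half_pos hε))).exists
  filter_upwards [h m (ε / 2) (half_pos hε)] with n hn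
  rw [Real.dist_eq]
  linarith

lemma abs_sInf_image_le_and_abs_sSup_image_le {β : Type*} {F : β → ℝ} {C : ℝ} (hC : 0 ≤ C)
    (hFC : ∀ z, |F z| ≤ C) (S : Set β) : |sInf (F '' S)| ≤ C ∧ |sSup (F '' S)| ≤ C := by
  have hs : ∀ y ∈ F '' S, -C ≤ y ∧ y ≤ C := Set.forall_mem_image.2 fun z _ => abs_le.1 (hFC z)
  have h₁ : -C ≤ sInf (F '' S) := Real.le_sInf (fun y hy => (hs y hy).1) (by linarith)
  have h₂ : sSup (F '' S) ≤ C := Real.sSup_le (fun y hy => (hs y hy).2) hC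
  have h₃ := Real.sInf_le_sSup _ ⟨-C, fun y hy => (hs y hy).1⟩ ⟨C, fun y hy => (hs y hy).2⟩
  exact ⟨abs_le.2 ⟨h₁, h₃.trans h₂⟩, abs_le.2 ⟨h₁.trans h₃, h₂⟩⟩

lemma sInf_image_le_and_le_sSup_image {β : Type*} {F : β → ℝ} {C : ℝ} (hFC : ∀ z, |F z| ≤ C)
    {S : Set β} {z : β} (hz : z ∈ S) : sInf (F '' S) ≤ F z ∧ F z ≤ sSup (F '' S) :=
  have hFz := Set.mem_image_of_mem F hz
  ⟨csInf_le ⟨-C, Set.forall_mem_image.2 fun z _ => (abs_le.1 (hFC z)).1⟩ hFz,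
    le_csSup ⟨C, Set.forall_mem_image.2 fun z _ => (abs_le.1 (hFC z)).2⟩ hFz⟩

/-! ### Birkhoff's ergodic theorem for bounded functions -/

section Birkhoff

variable {α : Type*} {T : α → α} {f : α → ℝ} {C : ℝ}

lemma abs_birkhoffSum_le (hfC : ∀ x, |f x| ≤ C) (n : ℕ) (x : α) :
    |birkhoffSum T f n x| ≤ n * C :=
  calc |birkhoffSum T f n x| ≤ ∑ k ∈ Finset.range n, |f (T^[k] x)| :=
        Finset.abs_sum_le_sum_abs _ _
    _ ≤ ∑ k ∈ Finset.range n, C := Finset.sum_le_sum fun k _ => hfC (T^[k] x)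
    _ = n * C := by simp

lemma abs_birkhoffAverage_le (hfC : ∀ x, |f x| ≤ C) (n : ℕ) (x : α) :
    |birkhoffAverage ℝ T f n x| ≤ C := by
  rcases n.eq_zero_or_pos with rfl | hn
  · simpa using (abs_nonneg _).trans (hfC x)
  rw [birkhoffAverage, smul_eq_mul, abs_mul, abs_inv, Nat.abs_cast,
    inv_mul_le_iff₀ (by positivity)]
  exact abs_birkhoffSum_le hfC n x

lemma isBoundedUnder_le_birkhoffAverage (hfC : ∀ x, |f x| ≤ C) (x : α) :
    IsBoundedUnder (· ≤ ·) atTop (birkhoffAverage ℝ T f · x) :=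
  isBoundedUnder_of ⟨C, fun n => (abs_le.1 (abs_birkhoffAverage_le hfC n x)).2⟩

lemma isBoundedUnder_ge_birkhoffAverage (hfC : ∀ x, |f x| ≤ C) (x : α) :
    IsBoundedUnder (· ≥ ·) atTop (birkhoffAverage ℝ T f · x) :=
  isBoundedUnder_of ⟨-C, fun n => (abs_le.1 (abs_birkhoffAverage_le hfC n x)).1⟩

lemma limsup_birkhoffAverage_apply (hfC : ∀ x, |f x| ≤ C) (x : α) :
    limsup (birkhoffAverage ℝ T f · (T x)) atTop = limsup (birkhoffAverage ℝ T f · x) atTop := by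
  have h := tendsto_birkhoffAverage_apply_sub_birkhoffAverage' ℝ (g := f)
    (isBounded_iff_forall_norm_le.2 ⟨C, Set.forall_mem_range.2 hfC⟩) T x
  exact le_antisymm
    (limsup_le_limsup_of_tendsto_sub (isBoundedUnder_le_birkhoffAverage hfC x)
      (isBoundedUnder_ge_birkhoffAverage hfC x) h)
    (limsup_le_limsup_of_tendsto_sub (isBoundedUnder_le_birkhoffAverage hfC (T x))
      (isBoundedUnder_ge_birkhoffAverage hfC (T x)) (by simpa using h.neg))

noncomputable def birkhoffMax (T : α → α) (f : α → ℝ) (N : ℕ) (x : α) : ℝ :=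
  (Finset.range (N + 1)).sup' Finset.nonempty_range_add_one (birkhoffSum T f · x)

lemma birkhoffSum_le_birkhoffMax {k N : ℕ} (hk : k ≤ N) (x : α) :
    birkhoffSum T f k x ≤ birkhoffMax T f N x :=
  Finset.le_sup' (birkhoffSum T f · x) (Finset.mem_range_succ_iff.2 hk)

lemma birkhoffMax_nonneg (N : ℕ) (x : α) : 0 ≤ birkhoffMax T f N x := by
  simpa using birkhoffSum_le_birkhoffMax (T := T) (f := f) N.zero_le x

lemma birkhoffMax_mono (x : α) : Monotone (birkhoffMax T f · x) := fun _ _ h =>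
  Finset.sup'_mono _ (Finset.range_subset_range.2 (by omega)) _

lemma birkhoffMax_le (hfC : ∀ x, |f x| ≤ C) (N : ℕ) (x : α) :
    birkhoffMax T f N x ≤ N * |C| :=
  Finset.sup'_le _ _ fun k hk => by
    have hk : (k : ℝ) ≤ N := by exact_mod_cast Finset.mem_range_succ_iff.1 hk
    calc birkhoffSum T f k x ≤ k * C := (le_abs_self _).trans (abs_birkhoffSum_le hfC k x)
      _ ≤ k * |C| := by gcongr; exact le_abs_self C
      _ ≤ N * |C| := by gcongr

lemma birkhoffMax_le_add_birkhoffMax_apply {N : ℕ} {x : α} (hx : 0 < birkhoffMax T f N x) :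
    birkhoffMax T f N x ≤ f x + birkhoffMax T f N (T x) := by
  obtain ⟨k, hk, hkx⟩ := Finset.exists_mem_eq_sup' Finset.nonempty_range_add_one
    (birkhoffSum T f · x)
  rw [birkhoffMax, hkx] at hx ⊢
  rcases k with _ | k
  · simp at hx
  rw [birkhoffSum_succ']
  gcongr
  exact birkhoffSum_le_birkhoffMax (by simp at hk; omega) _

variable [MeasurableSpace α]

lemma measurable_birkhoffSum (hT : Measurable T) (hf : Measurable f) (n : ℕ) :
    Measurable (birkhoffSum T f n) :=
  Finset.measurable_sum _ fun k _ => hf.comp (hT.iterate k)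

lemma measurable_birkhoffMax (hT : Measurable T) (hf : Measurable f) (N : ℕ) :
    Measurable (birkhoffMax T f N) :=
  Finset.measurable_range_sup'' fun k _ => measurable_birkhoffSum hT hf k

variable {μ : Measure α}

/-- The maximal ergodic theorem, by Garsia's argument. -/
theorem MeasureTheory.MeasurePreserving.setIntegral_birkhoffMax_pos_nonneg [IsFiniteMeasure μ]
    (hT : MeasurePreserving T μ μ) (hf : Measurable f) (hfC : ∀ x, |f x| ≤ C) (N : ℕ) :
    0 ≤ ∫ x in {x | 0 < birkhoffMax T f N x}, f x ∂μ := by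
  set M := birkhoffMax T f N
  have hM : Measurable M := measurable_birkhoffMax hT.measurable hf N
  have hMi : Integrable M μ := .of_bound hM.aestronglyMeasurable (N * |C|) <| ae_of_all _
    fun x => by
      rw [Real.norm_eq_abs, abs_of_nonneg (birkhoffMax_nonneg N x)]
      exact birkhoffMax_le hfC N x
  have hMTi : Integrable (M ∘ T) μ := hT.integrable_comp_of_integrable hMi
  have hfi : Integrable f μ := .of_bound hf.aestronglyMeasurable C (ae_of_all _ hfC)
  calc 0 = ∫ x, M x ∂μ - ∫ x, M (T x) ∂μ := by
        rw [← integral_map hT.aemeasurable hM.aestronglyMeasurable, hT.map_eq, sub_self]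
    _ ≤ ∫ x in {x | 0 < M x}, M x ∂μ - ∫ x in {x | 0 < M x}, M (T x) ∂μ := by
        rw [← setIntegral_eq_integral_of_forall_compl_eq_zero (μ := μ) (f := M) fun x hx =>
          le_antisymm (not_lt.1 hx) (birkhoffMax_nonneg N x)]
        exact sub_le_sub_left
          (setIntegral_le_integral hMTi (ae_of_all _ fun x => birkhoffMax_nonneg N (T x))) _
    _ = ∫ x in {x | 0 < M x}, (M x - M (T x)) ∂μ :=
        (integral_sub hMi.integrableOn hMTi.integrableOn).symm
    _ ≤ ∫ x in {x | 0 < M x}, f x ∂μ :=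
        setIntegral_mono_on (hMi.sub hMTi).integrableOn hfi.integrableOn
          (measurableSet_lt measurable_const hM) fun x hx => by
            linarith [birkhoffMax_le_add_birkhoffMax_apply (T := T) (f := f) hx]

theorem MeasureTheory.MeasurePreserving.integral_nonneg_of_ae_exists_birkhoffSum_pos
    [IsFiniteMeasure μ] (hT : MeasurePreserving T μ μ) (hf : Measurable f)
    (hfC : ∀ x, |f x| ≤ C) (h : ∀ᵐ x ∂μ, ∃ n, 0 < birkhoffSum T f n x) :
    0 ≤ ∫ x, f x ∂μ := by
  set E : ℕ → Set α := fun N => {x | 0 < birkhoffMax T f N x}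
  have hE N : MeasurableSet (E N) :=
    measurableSet_lt measurable_const (measurable_birkhoffMax hT.measurable hf N)
  have hcover : ∀ᵐ x ∂μ, x ∈ ⋃ N, E N := h.mono fun x ⟨n, hn⟩ =>
    Set.mem_iUnion.2 ⟨n, hn.trans_le (birkhoffSum_le_birkhoffMax le_rfl x)⟩
  have hfi : Integrable f μ := .of_bound hf.aestronglyMeasurable C (ae_of_all _ hfC)
  have hlim := tendsto_setIntegral_of_monotone hE
    (fun _ _ hNM x hx => hx.trans_le (birkhoffMax_mono x hNM)) hfi.integrableOn
  rw [Measure.restrict_eq_self_of_ae_mem hcover] at hlim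
  exact ge_of_tendsto' hlim fun N => hT.setIntegral_birkhoffMax_pos_nonneg hf hfC N

theorem Ergodic.ae_limsup_birkhoffAverage_le_integral [IsProbabilityMeasure μ]
    (hT : Ergodic T μ) (hf : Measurable f) (hfC : ∀ x, |f x| ≤ C) :
    ∀ᵐ x ∂μ, limsup (birkhoffAverage ℝ T f · x) atTop ≤ ∫ x, f x ∂μ := by
  set L : α → ℝ := fun x => limsup (birkhoffAverage ℝ T f · x) atTop
  have hL : Measurable L := Measurable.limsup fun n =>
    (measurable_birkhoffSum hT.measurable hf n).const_smul (n : ℝ)⁻¹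
  obtain ⟨c, hc⟩ := hT.ae_eq_const_of_ae_eq_comp_ae hL.aestronglyMeasurable
    (.of_forall fun x => limsup_birkhoffAverage_apply hfC x)
  suffices c ≤ ∫ x, f x ∂μ from hc.mono fun x hx => hx.trans_le this
  refine le_of_forall_lt_imp_le_of_dense fun a ha => ?_
  have hpos : ∀ᵐ x ∂μ, ∃ n, 0 < birkhoffSum T (fun y => f y - a) n x := by
    filter_upwards [hc] with x hx
    have hfreq : ∃ᶠ n in atTop, a < birkhoffAverage ℝ T f n x :=
      frequently_lt_of_lt_limsup (isBoundedUnder_ge_birkhoffAverage hfC x).isCoboundedUnder_le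
        (ha.trans_eq hx.symm)
    obtain ⟨n, han, hn⟩ := (hfreq.and_eventually (eventually_gt_atTop 0)).exists
    rw [birkhoffAverage, smul_eq_mul, lt_inv_mul_iff₀ (by positivity)] at han
    exact ⟨n, by simpa [birkhoffSum, Finset.sum_sub_distrib] using han⟩
  have hfa := hT.toMeasurePreserving.integral_nonneg_of_ae_exists_birkhoffSum_pos
    (f := fun y => f y - a) (hf.sub measurable_const)
    (fun x => (abs_sub _ _).trans (add_le_add_left (hfC x) _)) hpos
  rw [integral_sub (.of_bound hf.aestronglyMeasurable C (ae_of_all _ hfC)) (integrable_const a),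
    integral_const, probReal_univ, one_smul] at hfa
  linarith

theorem Ergodic.ae_tendsto_birkhoffAverage_integral [IsProbabilityMeasure μ]
    (hT : Ergodic T μ) (hf : Measurable f) (hfC : ∀ x, |f x| ≤ C) :
    ∀ᵐ x ∂μ, Tendsto (birkhoffAverage ℝ T f · x) atTop (𝓝 (∫ x, f x ∂μ)) := by
  have hfC' : ∀ x, |(-f) x| ≤ C := fun x => by simpa using hfC x
  filter_upwards [hT.ae_limsup_birkhoffAverage_le_integral hf hfC,
    hT.ae_limsup_birkhoffAverage_le_integral hf.neg hfC'] with x hup hlow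
  refine tendsto_order.2 ⟨fun a ha => ?_, fun b hb =>
    eventually_lt_of_limsup_lt (hup.trans_lt hb) (isBoundedUnder_le_birkhoffAverage hfC x)⟩
  have hlt : ∫ x, (-f) x ∂μ < -a := by simpa [integral_neg] using ha
  filter_upwards [eventually_lt_of_limsup_lt (hlow.trans_lt hlt)
    (isBoundedUnder_le_birkhoffAverage hfC' x)] with n hn
  simpa [birkhoffAverage_neg] using hn

end Birkhoff

/-! ### Double averages along a sequence with convergent visit frequencies -/

section Frequencies

variable {ι κ : Type*}

theorem tendsto_tsum_abs_sub_of_hasSum_one {l : Filter κ} {w : κ → ι → ℝ} {b : ι → ℝ}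
    (hw0 : ∀ n p, 0 ≤ w n p) (hw : ∀ᶠ n in l, HasSum (w n) 1) (hb0 : ∀ p, 0 ≤ b p)
    (hb : HasSum b 1) (hlim : ∀ p, Tendsto (w · p) l (𝓝 (b p))) :
    Tendsto (fun n => ∑' p, |w n p - b p|) l (𝓝 0) := by
  have hdeficit_le n p : max (b p - w n p) 0 ≤ b p := max_le (by linarith [hw0 n p]) (hb0 p)
  have hdeficit : Tendsto (fun n => ∑' p, max (b p - w n p) 0) l (𝓝 0) := by
    simpa using tendsto_tsum_of_dominated_convergence (f := fun n p => max (b p - w n p) 0)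
      (g := fun _ => 0) hb.summable
      (fun p => by simpa using ((hlim p).const_sub (b p)).max (tendsto_const_nhds (x := 0)))
      (.of_forall fun n p => by
        rw [Real.norm_eq_abs, abs_of_nonneg (le_max_right _ _)]
        exact hdeficit_le n p)
  -- `|t| = 2 max (-t) 0 + t`, and the `t = w n p - b p` sum to zero.
  refine (hdeficit.const_mul 2).congr' ?_ |>.trans (by simp)
  filter_upwards [hw] with n hn
  have hsum := (((hb.summable.of_nonneg_of_le (fun _ => le_max_right _ _)
    (hdeficit_le n)).hasSum.mul_left 2).add (hn.sub hb)).tsum_eq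
  rw [sub_self, add_zero] at hsum
  rw [← hsum]
  congr 1 with p
  rcases le_total (b p) (w n p) with h | h
  · rw [max_eq_right (by linarith), abs_of_nonneg (by linarith)]; ring
  · rw [max_eq_left (by linarith), abs_of_nonpos (by linarith)]; ring

lemma abs_mul_mul_sub_mul_mul_le {w₁ w₂ b₁ b₂ g D : ℝ} (hw₂ : 0 ≤ w₂) (hb₁ : 0 ≤ b₁)
    (hg : |g| ≤ D) :
    |w₁ * w₂ * g - b₁ * b₂ * g| ≤ D * (|w₁ - b₁| * w₂ + b₁ * |w₂ - b₂|) := by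
  rw [show w₁ * w₂ * g - b₁ * b₂ * g = ((w₁ - b₁) * w₂ + b₁ * (w₂ - b₂)) * g by ring, abs_mul,
    mul_comm D]
  refine mul_le_mul ((abs_add_le _ _).trans_eq ?_) hg (abs_nonneg _) (by positivity)
  rw [abs_mul, abs_mul, abs_of_nonneg hw₂, abs_of_nonneg hb₁]

lemma summable_mul_mul_of_abs_le {u : ι → ℝ} {G : ι × ι → ℝ} {D : ℝ} (hu : Summable u)
    (hu0 : ∀ p, 0 ≤ u p) (hG : ∀ pq, |G pq| ≤ D) :
    Summable fun pq : ι × ι => u pq.1 * u pq.2 * G pq :=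
  ((hu.mul_of_nonneg hu hu0 hu0).mul_left D).of_norm_bounded fun pq => by
    rw [Real.norm_eq_abs, abs_mul, abs_of_nonneg (mul_nonneg (hu0 _) (hu0 _)), mul_comm D]
    exact mul_le_mul_of_nonneg_left (hG pq) (mul_nonneg (hu0 _) (hu0 _))

theorem tendsto_tsum_mul_mul_of_hasSum_one {l : Filter κ} {w : κ → ι → ℝ} {b : ι → ℝ}
    {G : ι × ι → ℝ} {D : ℝ}
    (hw0 : ∀ n p, 0 ≤ w n p) (hw : ∀ᶠ n in l, HasSum (w n) 1) (hb0 : ∀ p, 0 ≤ b p)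
    (hb : HasSum b 1) (hlim : ∀ p, Tendsto (w · p) l (𝓝 (b p))) (hG : ∀ pq, |G pq| ≤ D) :
    Tendsto (fun n => ∑' pq : ι × ι, w n pq.1 * w n pq.2 * G pq) l
      (𝓝 (∑' pq : ι × ι, b pq.1 * b pq.2 * G pq)) := by
  rw [← tendsto_sub_nhds_zero_iff]
  refine squeeze_zero_norm' ?_
    (by simpa using (tendsto_tsum_abs_sub_of_hasSum_one hw0 hw hb0 hb hlim).const_mul (2 * D))
  filter_upwards [hw] with n hn
  set e := fun p => |w n p - b p|
  have he0 : 0 ≤ e := fun _ => abs_nonneg _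
  have he : Summable e := (hn.summable.add hb.summable).of_nonneg_of_le he0 fun p =>
    (abs_sub _ _).trans_eq (by rw [abs_of_nonneg (hw0 n p), abs_of_nonneg (hb0 p)])
  have hbound := ((he.hasSum.mul hn (he.mul_of_nonneg hn.summable he0 (hw0 n))).add
    (hb.mul he.hasSum (hb.summable.mul_of_nonneg he hb0 he0))).mul_left D
  have hdiff := (summable_mul_mul_of_abs_le hn.summable (hw0 n) hG).hasSum.sub
    (summable_mul_mul_of_abs_le hb.summable hb0 hG).hasSum
  have hterm := fun pq : ι × ι => abs_le.1 (abs_mul_mul_sub_mul_mul_le (w₁ := w n pq.1)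
    (b₂ := b pq.2) (hw0 n pq.2) (hb0 pq.1) (hG pq))
  rw [Real.norm_eq_abs, abs_le]
  constructor
  · linarith [hasSum_le (fun pq => (hterm pq).1) hbound.neg hdiff]
  · linarith [hasSum_le (fun pq => (hterm pq).2) hdiff hbound]

variable [DecidableEq ι]

lemma hasSum_card_fiber_mul (s : Finset κ) (g : κ → ι) (f : ι → ℝ) :
    HasSum (fun p => (#{a ∈ s | g a = p} : ℝ) * f p) (∑ a ∈ s, f (g a)) := by
  rw [Finset.sum_comp]
  simp only [nsmul_eq_mul]
  refine hasSum_sum_of_ne_finset_zero fun p hp => ?_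
  rw [Finset.filter_eq_empty_iff.2 fun a ha (hap : g a = p) =>
      hp (hap ▸ Finset.mem_image_of_mem g ha),
    Finset.card_empty, Nat.cast_zero, zero_mul]

noncomputable def empiricalFreq (P : ℕ → ι) (n : ℕ) (p : ι) : ℝ :=
  (#{i ∈ Finset.range n | P i = p} : ℝ) / n

lemma empiricalFreq_nonneg (P : ℕ → ι) (n : ℕ) (p : ι) : 0 ≤ empiricalFreq P n p := by
  unfold empiricalFreq; positivity

lemma hasSum_empiricalFreq (P : ℕ → ι) {n : ℕ} (hn : n ≠ 0) :
    HasSum (empiricalFreq P n) 1 := by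
  have h := (hasSum_card_fiber_mul (Finset.range n) P 1).div_const n
  simp only [Pi.one_apply, mul_one, Finset.sum_const, Finset.card_range, nsmul_eq_mul,
    div_self (Nat.cast_ne_zero.2 hn : (n : ℝ) ≠ 0)] at h
  exact h

lemma hasSum_empiricalFreq_mul_empiricalFreq (P : ℕ → ι) (n : ℕ) (G : ι × ι → ℝ) :
    HasSum (fun pq => empiricalFreq P n pq.1 * empiricalFreq P n pq.2 * G pq)
      (1 / (n : ℝ) ^ 2 * ∑ i ∈ Finset.range n, ∑ j ∈ Finset.range n, G (P i, P j)) := by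
  have h := (hasSum_card_fiber_mul (Finset.range n ×ˢ Finset.range n) (Prod.map P P) G).mul_left
    (1 / (n : ℝ) ^ 2)
  rw [Finset.sum_product] at h
  refine h.congr_fun fun pq => ?_
  have hcard : #{a ∈ Finset.range n ×ˢ Finset.range n | Prod.map P P a = pq} =
      #{i ∈ Finset.range n | P i = pq.1} * #{j ∈ Finset.range n | P j = pq.2} := by
    rw [← Finset.card_product, ← Finset.filter_product]
    simp only [Prod.ext_iff, Prod.map_fst, Prod.map_snd]
  rw [hcard, empiricalFreq, empiricalFreq]
  push_cast
  ring

theorem tendsto_double_average_of_tendsto_empiricalFreq {P : ℕ → ι} {b : ι → ℝ}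
    {G : ι × ι → ℝ} {D : ℝ} (hb0 : ∀ p, 0 ≤ b p) (hb : HasSum b 1)
    (hP : ∀ p, Tendsto (empiricalFreq P · p) atTop (𝓝 (b p))) (hG : ∀ pq, |G pq| ≤ D) :
    Tendsto (fun n : ℕ => 1 / (n : ℝ) ^ 2 *
        ∑ i ∈ Finset.range n, ∑ j ∈ Finset.range n, G (P i, P j))
      atTop (𝓝 (∑' pq : ι × ι, b pq.1 * b pq.2 * G pq)) :=
  (tendsto_tsum_mul_mul_of_hasSum_one (empiricalFreq_nonneg P)
    ((eventually_ne_atTop 0).mono fun _ => hasSum_empiricalFreq P) hb0 hb hP hG).congr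
    fun n => (hasSum_empiricalFreq_mul_empiricalFreq P n G).tsum_eq

lemma birkhoffAverage_indicator_eq_empiricalFreq {α : Type*} {T : α → α} {B : ι → Set α}
    (hB : Pairwise (Disjoint on B)) {x : α} {P : ℕ → ι} (hP : ∀ i, T^[i] x ∈ B (P i))
    (n : ℕ) (p : ι) :
    birkhoffAverage ℝ T ((B p).indicator 1) n x = empiricalFreq P n p := by
  have hind i : (B p).indicator (1 : α → ℝ) (T^[i] x) = if P i = p then 1 else 0 := by
    split_ifs with h
    · exact Set.indicator_of_mem (h ▸ hP i) _
    · exact Set.indicator_of_notMem (Set.disjoint_left.1 (hB h) (hP i)) _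
  simp only [birkhoffAverage, birkhoffSum, hind, Finset.sum_boole, empiricalFreq, smul_eq_mul]
  ring

end Frequencies

/-! ### Countable measurable partitions -/

section Partition

variable {α ι : Type*}

lemma pairwise_disjoint_prod {B : ι → Set α} (hB : Pairwise (Disjoint on B)) :
    Pairwise (Disjoint on fun pq : ι × ι => B pq.1 ×ˢ B pq.2) := fun pq pq' hne => by
  rw [onFun, Set.disjoint_prod]
  by_cases h : pq.1 = pq'.1
  · exact Or.inr (hB fun h' => hne (Prod.ext h h'))
  · exact Or.inl (hB h)

variable [MeasurableSpace α] {μ : Measure α}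

theorem MeasureTheory.MeasurePreserving.ae_forall_iterate {T : α → α} {p : α → Prop}
    (hT : MeasurePreserving T μ μ) (h : ∀ᵐ x ∂μ, p x) : ∀ᵐ x ∂μ, ∀ k, p (T^[k] x) :=
  ae_all_iff.2 fun k => (hT.iterate k).quasiMeasurePreserving.ae h

theorem MeasureTheory.measure_disjointed [Preorder ι] [LocallyFiniteOrderBot ι] [Countable ι]
    {A : ι → Set α} (hA : Pairwise (AEDisjoint μ on A)) (i : ι) :
    μ (disjointed A i) = μ (A i) := by
  rw [disjointed_apply, Finset.sup_set_eq_biUnion]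
  exact AEDisjoint.measure_sdiff_left <| AEDisjoint.iUnion_right_iff.2 fun k =>
    AEDisjoint.iUnion_right_iff.2 fun hk => hA (Finset.mem_Iio.1 hk).ne'

theorem MeasureTheory.hasSum_measureReal_of_pairwise_disjoint [Countable ι] [IsFiniteMeasure μ]
    {B : ι → Set α} (hB : ∀ i, MeasurableSet (B i)) (hd : Pairwise (Disjoint on B)) :
    HasSum (fun i => μ.real (B i)) (μ.real (⋃ i, B i)) := by
  rw [measureReal_def, measure_iUnion hd hB, ENNReal.tsum_toReal_eq fun i => measure_ne_top μ _]
  exact (ENNReal.summable_toReal (measure_iUnion hd hB ▸ measure_ne_top μ _)).hasSum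

lemma ae_mem_iUnion_prod [SFinite μ] {B : ι → Set α} (hcover : ∀ᵐ x ∂μ, x ∈ ⋃ i, B i) :
    ∀ᵐ z ∂μ.prod μ, z ∈ ⋃ pq : ι × ι, B pq.1 ×ˢ B pq.2 := by
  filter_upwards [Measure.quasiMeasurePreserving_fst.ae hcover,
    Measure.quasiMeasurePreserving_snd.ae hcover] with z h₁ h₂
  obtain ⟨p, hp⟩ := Set.mem_iUnion.1 h₁
  obtain ⟨q, hq⟩ := Set.mem_iUnion.1 h₂
  exact Set.mem_iUnion.2 ⟨(p, q), hp, hq⟩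

theorem MeasureTheory.tsum_measureReal_mul_le_integral [Countable ι] [IsFiniteMeasure μ]
    {R : ι → Set α} {F : α → ℝ} {g : ι → ℝ} (hR : ∀ i, MeasurableSet (R i))
    (hd : Pairwise (AEDisjoint μ on R)) (hcover : ∀ᵐ x ∂μ, x ∈ ⋃ i, R i) (hF : Integrable F μ)
    (hg : ∀ i, ∀ x ∈ R i, g i ≤ F x) (hgs : Summable fun i => μ.real (R i) * g i) :
    ∑' i, μ.real (R i) * g i ≤ ∫ x, F x ∂μ := by
  have h := hasSum_integral_iUnion_ae (fun i => (hR i).nullMeasurableSet) hd hF.integrableOn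
  rw [Measure.restrict_eq_self_of_ae_mem hcover] at h
  refine hasSum_le (fun i => ?_) hgs.hasSum h
  simpa [setIntegral_const] using
    setIntegral_mono_on (integrableOn_const (C := g i)) hF.integrableOn (hR i) (hg i)

theorem MeasureTheory.tsum_measureReal_mul_measureReal_mul_le_integral_prod [Countable ι]
    [IsFiniteMeasure μ] {B : ι → Set α} (hB : ∀ i, MeasurableSet (B i))
    (hBd : Pairwise (Disjoint on B)) (hcover : ∀ᵐ x ∂μ, x ∈ ⋃ i, B i) {F : α × α → ℝ}
    (hF : Integrable F (μ.prod μ)) {g : ι × ι → ℝ}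
    (hg : ∀ pq, ∀ u ∈ B pq.1, ∀ v ∈ B pq.2, g pq ≤ F (u, v))
    (hgs : Summable fun pq : ι × ι => μ.real (B pq.1) * μ.real (B pq.2) * g pq) :
    ∑' pq : ι × ι, μ.real (B pq.1) * μ.real (B pq.2) * g pq ≤ ∫ z, F z ∂μ.prod μ := by
  simpa only [measureReal_prod_prod] using tsum_measureReal_mul_le_integral
    (fun pq => (hB pq.1).prod (hB pq.2)) (pairwise_disjoint_prod hBd).aedisjoint
    (ae_mem_iUnion_prod hcover) hF (fun pq z hz => hg pq z.1 hz.1 z.2 hz.2)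
    (by simpa only [measureReal_prod_prod] using hgs)

theorem MeasureTheory.integral_prod_le_tsum_measureReal_mul_measureReal_mul [Countable ι]
    [IsFiniteMeasure μ] {B : ι → Set α} (hB : ∀ i, MeasurableSet (B i))
    (hBd : Pairwise (Disjoint on B)) (hcover : ∀ᵐ x ∂μ, x ∈ ⋃ i, B i) {F : α × α → ℝ}
    (hF : Integrable F (μ.prod μ)) {g : ι × ι → ℝ}
    (hg : ∀ pq, ∀ u ∈ B pq.1, ∀ v ∈ B pq.2, F (u, v) ≤ g pq)
    (hgs : Summable fun pq : ι × ι => μ.real (B pq.1) * μ.real (B pq.2) * g pq) :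
    ∫ z, F z ∂μ.prod μ ≤ ∑' pq : ι × ι, μ.real (B pq.1) * μ.real (B pq.2) * g pq := by
  have h := tsum_measureReal_mul_measureReal_mul_le_integral_prod hB hBd hcover hF.neg (g := -g)
    (fun pq u hu v hv => neg_le_neg (hg pq u hu v hv)) (by simpa using hgs.neg)
  simpa [tsum_neg, integral_neg] using h

end Partition

theorem eventually_abs_double_average_sub_integral_lt {α ι : Type*} [MeasurableSpace α]
    [Countable ι] [DecidableEq ι] {μ : Measure α} [IsProbabilityMeasure μ] {A B : ι → Set α}
    (hB : ∀ p, MeasurableSet (B p)) (hBd : Pairwise (Disjoint on B))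
    (hcover : ∀ᵐ x ∂μ, x ∈ ⋃ p, B p) (hBA : ∀ p, B p ⊆ A p)
    {F : α × α → ℝ} {C : ℝ} (hF : Measurable F) (hFC : ∀ z, |F z| ≤ C)
    {x : ℕ → α} {P : ℕ → ι} (hP : ∀ i, x i ∈ B (P i))
    (hfreq : ∀ p, Tendsto (empiricalFreq P · p) atTop (𝓝 (μ.real (B p)))) {ε : ℝ}
    (hε : 0 < ε) :
    ∀ᶠ n : ℕ in atTop,
      |1 / (n : ℝ) ^ 2 * ∑ i ∈ Finset.range n, ∑ j ∈ Finset.range n, F (x i, x j)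
        - ∫ z, F z ∂μ.prod μ| <
      ∑' pq : ι × ι, μ.real (B pq.1) * μ.real (B pq.2) *
        (sSup (F '' (A pq.1 ×ˢ A pq.2)) - sInf (F '' (A pq.1 ×ˢ A pq.2))) + ε := by
  set lower := fun pq : ι × ι => sInf (F '' (A pq.1 ×ˢ A pq.2))
  set upper := fun pq : ι × ι => sSup (F '' (A pq.1 ×ˢ A pq.2))
  have hC : 0 ≤ C := (abs_nonneg _).trans (hFC (x 0, x 0))
  have hlowerC pq : |lower pq| ≤ C := (abs_sInf_image_le_and_abs_sSup_image_le hC hFC _).1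
  have hupperC pq : |upper pq| ≤ C := (abs_sInf_image_le_and_abs_sSup_image_le hC hFC _).2
  have hmem (pq : ι × ι) (u : α) (hu : u ∈ B pq.1) (v : α) (hv : v ∈ B pq.2) :
      lower pq ≤ F (u, v) ∧ F (u, v) ≤ upper pq :=
    sInf_image_le_and_le_sSup_image hFC (Set.mk_mem_prod (hBA _ hu) (hBA _ hv))
  have hU : μ.real (⋃ p, B p) = 1 :=
    (measureReal_congr (ae_eq_univ (s := ⋃ p, B p).2 hcover)).trans probReal_univ
  have hb : HasSum (fun p => μ.real (B p)) 1 := hU ▸ hasSum_measureReal_of_pairwise_disjoint hB hBd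
  have hsum {G : ι × ι → ℝ} (hG : ∀ pq, |G pq| ≤ C) :=
    summable_mul_mul_of_abs_le hb.summable (fun _ => measureReal_nonneg) hG
  have hFi : Integrable F (μ.prod μ) := .of_bound hF.aestronglyMeasurable C (ae_of_all _ hFC)
  have hlow := tsum_measureReal_mul_measureReal_mul_le_integral_prod hB hBd hcover hFi
    (fun pq u hu v hv => (hmem pq u hu v hv).1) (hsum hlowerC)
  have hup := integral_prod_le_tsum_measureReal_mul_measureReal_mul hB hBd hcover hFi
    (fun pq u hu v hv => (hmem pq u hu v hv).2) (hsum hupperC)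
  have hgap := (hsum hupperC).tsum_sub (hsum hlowerC)
  simp only [← mul_sub, upper, lower] at hgap
  rw [hgap]
  refine eventually_abs_sub_lt_of_le_of_le (fun n => ?_) (fun n => ?_)
    (tendsto_double_average_of_tendsto_empiricalFreq (fun _ => measureReal_nonneg) hb hfreq
      hlowerC)
    (tendsto_double_average_of_tendsto_empiricalFreq (fun _ => measureReal_nonneg) hb hfreq
      hupperC)
    hlow hup hε
  · gcongr with i _ j _
    exact (hmem (P i, P j) _ (hP i) _ (hP j)).1
  · gcongr with i _ j _
    exact (hmem (P i, P j) _ (hP i) _ (hP j)).2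

/-- Let `(M̄, T̄, μ̄)` be a probability-preserving ergodic dynamical system and
`(A_m)` a sequence of essential partitions (countable collections of measurable
sets, pairwise intersecting in measure zero, whose union has full measure).
If `F` is bounded measurable and
`∑_{A,B ∈ A_m} μ̄(A) μ̄(B) (sup_{A×B} F − inf_{A×B} F) → 0`,
then for a.e. `x`, `(1/n²) ∑_{0≤i,j≤n−1} F(T̄^i x, T̄^j x) → ∫∫ F dμ̄ dμ̄`. -/
theorem stmt1 {Ω : Type*} [MeasurableSpace Ω] (μ : Measure Ω) [IsProbabilityMeasure μ]
    (T : Ω → Ω) (hT : Ergodic T μ)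
    (A : ℕ → ℕ → Set Ω)
    (hAmeas : ∀ m i, MeasurableSet (A m i))
    (hAdisj : ∀ m i j, i ≠ j → μ (A m i ∩ A m j) = 0)
    (hAfull : ∀ m, μ (⋃ i, A m i) = 1)
    (F : Ω × Ω → ℝ) (hFmeas : Measurable F)
    (Cb : ℝ) (hFb : ∀ p, |F p| ≤ Cb)
    (hcond : Tendsto (fun m => ∑' ij : ℕ × ℕ,
        (μ (A m ij.1)).toReal * (μ (A m ij.2)).toReal *
          (sSup (F '' (A m ij.1 ×ˢ A m ij.2)) - sInf (F '' (A m ij.1 ×ˢ A m ij.2))))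
      atTop (nhds 0)) :
    ∀ᵐ x ∂μ, Tendsto (fun n : ℕ =>
        (1 : ℝ) / (n : ℝ) ^ 2 *
          ∑ i ∈ Finset.range n, ∑ j ∈ Finset.range n, F (T^[i] x, T^[j] x))
      atTop (nhds (∫ p, F p ∂(μ.prod μ))) := by
  -- Each orbit point must lie in exactly one cell; disjointifying moves cells by null sets only.
  set B : ℕ → ℕ → Set Ω := fun m => disjointed (A m)
  have hB m p : MeasurableSet (B m p) := MeasurableSet.disjointed (hAmeas m) p
  have hBA m p : μ.real (B m p) = (μ (A m p)).toReal :=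
    congrArg ENNReal.toReal (measure_disjointed (fun i j hij => hAdisj m i j hij) p)
  have hcover m : ∀ᵐ x ∂μ, x ∈ ⋃ p, B m p := by
    rw [iUnion_disjointed]
    exact (ae_iff_measure_eq (MeasurableSet.iUnion (hAmeas m)).nullMeasurableSet).2
      ((hAfull m).trans measure_univ.symm)
  have hfreq : ∀ᵐ x ∂μ, ∀ m p,
      Tendsto (birkhoffAverage ℝ T ((B m p).indicator 1) · x) atTop (𝓝 (μ.real (B m p))) := by
    refine ae_all_iff.2 fun m => ae_all_iff.2 fun p => ?_
    simpa [integral_indicator_one (hB m p)] using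
      hT.ae_tendsto_birkhoffAverage_integral (f := (B m p).indicator 1)
        (measurable_const.indicator (hB m p)) (C := 1)
        fun y => by simpa using norm_indicator_le_norm_self (s := B m p) (1 : Ω → ℝ) y
  have horbit := ae_all_iff.2 fun m => hT.toMeasurePreserving.ae_forall_iterate (hcover m)
  filter_upwards [hfreq, horbit] with x hx hxorbit
  refine tendsto_of_forall_eventually_abs_sub_lt hcond fun m ε hε => ?_
  choose P hP using fun k => Set.mem_iUnion.1 (hxorbit m k)
  simpa only [hBA] using eventually_abs_double_average_sub_integral_lt (hB m)
    (disjoint_disjointed _) (hcover m) (disjointed_subset _) hFmeas hFb (x := (T^[·] x)) hP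
    (fun p => (hx m p).congr (birkhoffAverage_indicator_eq_empiricalFreq
      (disjoint_disjointed _) hP · p)) hε
end

section
/- Let (E,d) be a metric space and S > 0. Let (f_n)_{n∈ℕ} be a sequence of continuous functions f_n : [0,S] → E converging pointwise to a continuous function f : [0,S] → E, and suppose that each f_n satisfies the following monotone-increment property: for all 0 ≤ r ≤ s ≤ t ≤ S, max( d(f_n(r), f_n(s)), d(f_n(s), f_n(t)) ) ≤ d(f_n(r), f_n(t)). Then f_n converges to f uniformly on [0,S], i.e. sup_{t ∈ [0,S]} d(f_n(t), f(t)) → 0 as n → ∞. -/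
open Filter

/-- Dini-type theorem: if continuous functions `f n : [0,S] → E` converge pointwise to a
continuous `g` on `[0,S]` and each `f n` has the monotone-increment property
`max(d(f n r, f n s), d(f n s, f n t)) ≤ d(f n r, f n t)` for `0 ≤ r ≤ s ≤ t ≤ S`,
then the convergence is uniform on `[0,S]`. -/
theorem stmt3 {E : Type*} [MetricSpace E] (S : ℝ) (hS : 0 < S)
    (f : ℕ → ℝ → E) (g : ℝ → E)
    (hfc : ∀ n, ContinuousOn (f n) (Set.Icc 0 S))
    (hgc : ContinuousOn g (Set.Icc 0 S))
    (hptwise : ∀ t ∈ Set.Icc (0 : ℝ) S, Tendsto (fun n => f n t) atTop (nhds (g t)))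
    (hmono : ∀ n, ∀ r s t : ℝ, 0 ≤ r → r ≤ s → s ≤ t → t ≤ S →
      max (dist (f n r) (f n s)) (dist (f n s) (f n t)) ≤ dist (f n r) (f n t)) :
    TendstoUniformlyOn f g atTop (Set.Icc 0 S) := by
  rw [Metric.tendstoUniformlyOn_iff]
  intro ε hε
  have hε' : 0 < ε / 5 := by positivity
  have hgu : UniformContinuousOn g (Set.Icc 0 S) :=
    isCompact_Icc.uniformContinuousOn_of_continuous hgc
  rw [Metric.uniformContinuousOn_iff] at hgu
  obtain ⟨δ, hδ, hgδ⟩ := hgu (ε / 5) hε'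
  obtain ⟨N, hN⟩ := exists_nat_gt (S / δ)
  have hN0 : 0 < (N : ℝ) := lt_trans (div_pos hS hδ) hN
  have hN0' : 0 < N := Nat.cast_pos.mp hN0
  set η : ℝ := S / N with hηdef
  have hη : 0 < η := div_pos hS hN0
  have hηδ : η < δ := by
    rw [hηdef, div_lt_iff₀ hN0]
    rw [div_lt_iff₀ hδ] at hN
    nlinarith
  have hmem : ∀ i : ℕ, i ≤ N → (i : ℝ) * η ∈ Set.Icc (0:ℝ) S := by
    intro i hi
    constructor
    · positivity
    · calc (i : ℝ) * η ≤ (N : ℝ) * η := by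
            apply mul_le_mul_of_nonneg_right _ hη.le
            exact_mod_cast hi
      _ = S := by rw [hηdef]; field_simp
  have key : ∀ᶠ n in atTop, ∀ i ∈ Finset.range (N + 1),
      dist (f n ((i : ℝ) * η)) (g ((i : ℝ) * η)) < ε / 5 := by
    rw [eventually_all_finset]
    intro i hi
    have hi' : i ≤ N := Nat.lt_succ_iff.mp (Finset.mem_range.mp hi)
    have := (hptwise _ (hmem i hi')).eventually (Metric.ball_mem_nhds _ hε')
    filter_upwards [this] with n hn
    exact Metric.mem_ball.mp hn
  filter_upwards [key] with n hn x hx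
  obtain ⟨hx0, hxS⟩ := hx
  set i : ℕ := min ⌊x * N / S⌋₊ (N - 1) with hidef
  have hiN1 : i ≤ N - 1 := min_le_right _ _
  have hi1N : i + 1 ≤ N := by omega
  set a : ℝ := (i : ℝ) * η with hadef
  set b : ℝ := ((i : ℝ) + 1) * η with hbdef
  have hba : b - a = η := by ring
  have ha0 : 0 ≤ a := by positivity
  have hbS : b ≤ S := by
    have := (hmem (i + 1) hi1N).2
    push_cast at this
    linarith [this]
  have hax : a ≤ x := by
    have h1 : (i : ℝ) ≤ x * N / S := by
      have : (i : ℝ) ≤ (⌊x * N / S⌋₊ : ℝ) := by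
        exact_mod_cast min_le_left ⌊x * N / S⌋₊ (N - 1)
      exact this.trans (Nat.floor_le (by positivity))
    calc a = (i : ℝ) * (S / N) := rfl
    _ ≤ (x * N / S) * (S / N) := by
          apply mul_le_mul_of_nonneg_right h1 (by positivity)
    _ = x := by field_simp
  have hxb : x ≤ b := by
    by_cases hc : ⌊x * N / S⌋₊ ≤ N - 1
    · have hi_eq : i = ⌊x * N / S⌋₊ := min_eq_left hc
      have h1 : x * N / S < (i : ℝ) + 1 := by
        rw [hi_eq]
        exact_mod_cast Nat.lt_floor_add_one (x * N / S)
      have : x = (x * N / S) * (S / N) := by field_simp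
      rw [this, hbdef]
      apply mul_le_mul_of_nonneg_right h1.le (by positivity)
    · push_neg at hc
      have hfl : N ≤ ⌊x * N / S⌋₊ := by omega
      have h1 : (N : ℝ) ≤ x * N / S := by
        have := Nat.le_floor_iff (α := ℝ) (by positivity) |>.mp hfl
        exact_mod_cast this
      have hxS' : S ≤ x := by
        have h2 : (N : ℝ) * S ≤ x * N := by
          have := (le_div_iff₀ hS).mp h1
          linarith
        nlinarith
      have hxeq : x = S := le_antisymm hxS hxS'
      have hieq : i = N - 1 := by
        rw [hidef]; exact min_eq_right (by omega)
      have : b = S := by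
        rw [hbdef, hieq]
        have : ((N - 1 : ℕ) : ℝ) + 1 = (N : ℝ) := by
          rw [Nat.cast_sub hN0']; push_cast; ring
        rw [this, hηdef]; field_simp
      rw [hxeq, this]
  have haI : a ∈ Set.Icc (0:ℝ) S := ⟨ha0, le_trans (hax.trans hxb) hbS⟩
  have hbI : b ∈ Set.Icc (0:ℝ) S := ⟨by positivity, hbS⟩
  have hxI : x ∈ Set.Icc (0:ℝ) S := ⟨hx0, hxS⟩
  have hd1 : dist (g x) (g a) < ε / 5 := by
    apply hgδ x hxI a haI
    rw [Real.dist_eq, abs_of_nonneg (by linarith)]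
    linarith
  have hd2 : dist (g a) (g b) < ε / 5 := by
    apply hgδ a haI b hbI
    rw [Real.dist_eq, abs_of_nonpos (by linarith)]
    linarith
  have hda : dist (f n a) (g a) < ε / 5 := by
    have := hn i (Finset.mem_range.mpr (by omega))
    simpa using this
  have hdb : dist (f n b) (g b) < ε / 5 := by
    have := hn (i + 1) (Finset.mem_range.mpr (by omega))
    have hcast : (((i : ℕ) + 1 : ℕ) : ℝ) * η = b := by push_cast; ring
    rwa [hcast] at this
  have hd5 : dist (f n a) (f n x) ≤ dist (f n a) (f n b) :=
    le_trans (le_max_left _ _) (hmono n a x b ha0 hax hxb hbS)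
  have hdb' : dist (g b) (f n b) < ε / 5 := by rw [dist_comm]; exact hdb
  have hda' : dist (g a) (f n a) < ε / 5 := by rw [dist_comm]; exact hda
  have hd6 : dist (f n a) (f n b) < 3 * (ε / 5) := by
    have htri := dist_triangle4 (f n a) (g a) (g b) (f n b)
    linarith
  have htri2 := dist_triangle4 (g x) (g a) (f n a) (f n x)
  linarith
end

section
/- Let S > 0 and let K be a subset of C⁰([0,S], ℝ) all of whose elements are nondecreasing functions. If K is compact for the topology of pointwise convergence (the topology induced on C⁰([0,S],ℝ) by the product topology of ℝ^{[0,S]}), then K is compact for the topology of the uniform norm ‖·‖_∞ on C⁰([0,S], ℝ). -/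
open Set Filter Topology

lemma key_bracket (S : ℝ) (f : C(Set.Icc (0 : ℝ) S, ℝ))
    (hf : Monotone (f : Set.Icc (0 : ℝ) S → ℝ)) {ε : ℝ} (hε : 0 < ε) :
    ∃ T : Finset (Set.Icc (0 : ℝ) S),
      ∀ g : C(Set.Icc (0 : ℝ) S, ℝ), Monotone (g : Set.Icc (0 : ℝ) S → ℝ) →
      (∀ t ∈ T, |g t - f t| < ε / 3) → ∀ s, |g s - f s| ≤ ε := by
  have hball : ∀ t : Set.Icc (0 : ℝ) S, {s | |f s - f t| < ε / 6} ∈ 𝓝 t := by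
    intro t
    have hc : Continuous fun s => |f s - f t| := (f.continuous.sub continuous_const).abs
    have h0 : |f t - f t| < ε / 6 := by simp; positivity
    exact hc.continuousAt.preimage_mem_nhds (isOpen_Iio.mem_nhds h0)
  have hchoice : ∀ t : Set.Icc (0 : ℝ) S, ∃ p : Set.Icc (0:ℝ) S × Set.Icc (0:ℝ) S,
      t ∈ Icc p.1 p.2 ∧ Icc p.1 p.2 ∈ 𝓝 t ∧ Icc p.1 p.2 ⊆ {s | |f s - f t| < ε / 6} := by
    intro t
    obtain ⟨b, c, h1, h2, h3⟩ := exists_Icc_mem_subset_of_mem_nhds (hball t)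
    exact ⟨(b, c), h1, h2, h3⟩
  choose p hp1 hp2 hp3 using hchoice
  obtain ⟨I, -, hI⟩ := isCompact_univ.elim_nhds_subcover (fun t => Icc (p t).1 (p t).2)
    (fun t _ => hp2 t)
  refine ⟨I.image (fun t => (p t).1) ∪ I.image (fun t => (p t).2), fun g hg hgT s => ?_⟩
  have hmem := hI (mem_univ s)
  simp only [Set.mem_iUnion] at hmem
  obtain ⟨t, ht, hs⟩ := hmem
  have hu : (p t).1 ∈ I.image (fun t => (p t).1) ∪ I.image (fun t => (p t).2) := by
    simp only [Finset.mem_union, Finset.mem_image]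
    exact Or.inl ⟨t, ht, rfl⟩
  have hv : (p t).2 ∈ I.image (fun t => (p t).1) ∪ I.image (fun t => (p t).2) := by
    simp only [Finset.mem_union, Finset.mem_image]
    exact Or.inr ⟨t, ht, rfl⟩
  have hgu := hgT _ hu
  have hgv := hgT _ hv
  have hfu : |f (p t).1 - f t| < ε / 6 := hp3 t ⟨le_refl _, (hp1 t).1.trans (hp1 t).2⟩
  have hfv : |f (p t).2 - f t| < ε / 6 := hp3 t ⟨(hp1 t).1.trans (hp1 t).2, le_refl _⟩
  have h1 : g s ≤ g (p t).2 := hg hs.2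
  have h2 : g (p t).1 ≤ g s := hg hs.1
  have h3 : f s ≤ f (p t).2 := hf hs.2
  have h4 : f (p t).1 ≤ f s := hf hs.1
  rw [abs_le]
  rw [abs_lt] at hgu hgv hfu hfv
  constructor <;> linarith
/-- Let `K ⊆ C([0,S], ℝ)` consist of nondecreasing functions. If `K` is compact for the
topology of pointwise convergence (i.e. its image in the product space `[0,S] → ℝ` is
compact), then `K` is compact for the uniform-norm topology of `C([0,S], ℝ)`. -/
theorem stmt4 (S : ℝ) (hS : 0 < S)
    (K : Set C(Set.Icc (0 : ℝ) S, ℝ))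
    (hmono : ∀ f ∈ K, Monotone (f : Set.Icc (0 : ℝ) S → ℝ))
    (hcpt : IsCompact
      ((fun f : C(Set.Icc (0 : ℝ) S, ℝ) => (f : Set.Icc (0 : ℝ) S → ℝ)) '' K)) :
    IsCompact K := by
  rw [isCompact_iff_ultrafilter_le_nhds]
  intro F hF
  set π : C(Set.Icc (0 : ℝ) S, ℝ) → (Set.Icc (0 : ℝ) S → ℝ) := fun f => ⇑f with hπ
  have hFmap : ↑(F.map π) ≤ 𝓟 (π '' K) := by
    calc (↑(F.map π) : Filter _) = Filter.map π ↑F := rfl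
    _ ≤ Filter.map π (𝓟 K) := Filter.map_mono hF
    _ = 𝓟 (π '' K) := Filter.map_principal
  obtain ⟨x, hx, hconv⟩ := hcpt.ultrafilter_le_nhds (F.map π) hFmap
  obtain ⟨f, hfK, rfl⟩ := hx
  refine ⟨f, hfK, ?_⟩
  have hKmem : K ∈ F := hF (Filter.mem_principal_self K)
  have hptw : ∀ t, Filter.Tendsto (fun g : C(Set.Icc (0 : ℝ) S, ℝ) => (g : Set.Icc (0 : ℝ) S → ℝ) t) (F : Filter C(Set.Icc (0 : ℝ) S, ℝ)) (𝓝 (f t)) := by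
    have : Filter.Tendsto π ↑F (𝓝 (π f)) := hconv
    rw [tendsto_pi_nhds] at this
    exact this
  rw [Metric.nhds_basis_ball.ge_iff]
  intro ε hε
  obtain ⟨T, hT⟩ := key_bracket S f (hmono f hfK) (by positivity : (0:ℝ) < ε / 2)
  have hev : ∀ᶠ g : C(Set.Icc (0 : ℝ) S, ℝ) in (F : Filter C(Set.Icc (0 : ℝ) S, ℝ)), ∀ t ∈ T, |g t - f t| < ε / 2 / 3 := by
    rw [Filter.eventually_all_finset]
    intro t ht
    have := (hptw t).eventually (Metric.ball_mem_nhds (f t) (by positivity : (0:ℝ) < ε / 2 / 3))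
    filter_upwards [this] with g hg
    simpa [Real.dist_eq] using hg
  filter_upwards [hev, hKmem] with g hg hgK
  have hle : ∀ s, |g s - f s| ≤ ε / 2 := hT g (hmono g hgK) hg
  have : dist g f ≤ ε / 2 := by
    rw [ContinuousMap.dist_le (by positivity)]
    intro x
    simpa [Real.dist_eq] using hle x
  simp only [Metric.mem_ball]
  linarith
end

section
/- Let T > 0, let (Ω, P) be a probability space, and let (ν_n)_{n∈ℕ} be a sequence of Borel-measurable random variables with values in C([0,T], ℝ) (equipped with the uniform norm) such that, P-almost surely, the function t ↦ ν_n(t) is nondecreasing on [0,T]. Let X be a Borel-measurable C([0,T], ℝ)-valued random variable. Suppose that for every finite family t₁, …, t_k ∈ [0,T], the law of the vector (ν_n(t₁), …, ν_n(t_k)) converges weakly in ℝ^k to the law of (X(t₁), …, X(t_k)) as n → ∞. Then the law of ν_n converges weakly, as a sequence of probability measures on C([0,T], ℝ), to the law of X. -/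
/-!
For a nondecreasing path `u`, each value `u t` lies between the values of `u` at the two grid
points around `t`, and so does the piecewise linear interpolant of the grid values; hence `u` is
uniformly within the largest grid increment of its interpolant. The interpolant and the largest
increment are continuous functions of finitely many values of `u`, so for a bounded `K`-Lipschitz
`f` the error `|E f(ν n) - E f(interpolant of ν n)|` is bounded by an expectation that converges
by the finite-dimensional hypothesis, as does `E f(interpolant of ν n)`. For the limit `X`, which
need not be monotone, the interpolation error and the largest increment both tend to zero as the
mesh shrinks, by uniform continuity and dominated convergence. Hence `E f(ν n) → E f(X)` for
every bounded Lipschitz `f`, and this characterizes weak convergence.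
-/

open MeasureTheory Filter Set Topology
open scoped NNReal BoundedContinuousFunction

noncomputable section

def tent (x : ℝ) : ℝ := max 0 (1 - |x|)

lemma tent_eq_zero_of_one_le_abs {x : ℝ} (hx : 1 ≤ |x|) : tent x = 0 :=
  max_eq_left (by linarith)

lemma tent_of_mem_Icc {x : ℝ} (h0 : 0 ≤ x) (h1 : x ≤ 1) : tent x = 1 - x := by
  rw [tent, abs_of_nonneg h0, max_eq_right (by linarith)]

lemma tent_sub_one_of_mem_Icc {x : ℝ} (h0 : 0 ≤ x) (h1 : x ≤ 1) : tent (x - 1) = x := by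
  rw [tent, abs_of_nonpos (by linarith), max_eq_right (by linarith)]
  ring

lemma exists_nat_le_le_succ {s : ℝ} {k : ℕ} (h0 : 0 ≤ s) (hk : s ≤ k + 1) :
    ∃ i : ℕ, i ≤ k ∧ (i : ℝ) ≤ s ∧ s ≤ i + 1 := by
  rcases le_or_gt ⌊s⌋₊ k with h | h
  · exact ⟨⌊s⌋₊, h, Nat.floor_le h0, (Nat.lt_floor_add_one s).le⟩
  · refine ⟨k, le_rfl, ?_, hk⟩
    exact (Nat.cast_le.2 h.le).trans (Nat.floor_le h0)

lemma sum_mul_tent_eq {k : ℕ} (a : Fin (k + 2) → ℝ) (i : Fin (k + 1)) {s : ℝ}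
    (hi : (i : ℝ) ≤ s) (hs : s ≤ i + 1) :
    ∑ j, a j * tent (s - j) = (1 - (s - i)) * a i.castSucc + (s - i) * a i.succ := by
  rw [Fintype.sum_eq_add i.castSucc i.succ (Fin.castSucc_lt_succ (i := i)).ne]
  · simp only [Fin.val_castSucc, Fin.val_succ, Nat.cast_add, Nat.cast_one]
    rw [tent_of_mem_Icc (by linarith) (by linarith), sub_add_eq_sub_sub,
      tent_sub_one_of_mem_Icc (by linarith) (by linarith)]
    ring
  · rintro j ⟨hj1, hj2⟩
    rw [tent_eq_zero_of_one_le_abs, mul_zero]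
    have hj1 : (j : ℕ) ≠ i := fun h => hj1 (Fin.ext h)
    have hj2 : (j : ℕ) ≠ i + 1 := fun h => hj2 (Fin.ext h)
    rcases lt_or_gt_of_ne hj1 with h | h
    · have : (j : ℝ) + 1 ≤ i := by exact_mod_cast h
      rw [abs_of_nonneg (by linarith)]; linarith
    · have : (i : ℝ) + 2 ≤ j := by exact_mod_cast (show (i : ℕ) + 2 ≤ j by omega)
      rw [abs_of_nonpos (by linarith)]; linarith

variable {T : ℝ}

def gridPoint (hT : 0 < T) (k : ℕ) (i : Fin (k + 2)) : Icc 0 T :=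
  ⟨i * T / (k + 1), by positivity, by
    rw [div_le_iff₀ (by positivity), mul_comm]
    gcongr
    exact_mod_cast i.is_le⟩

lemma gridPoint_castSucc_le_succ (hT : 0 < T) {k : ℕ} (i : Fin (k + 1)) :
    gridPoint hT k i.castSucc ≤ gridPoint hT k i.succ := by
  simp only [← Subtype.coe_le_coe, gridPoint, Fin.val_castSucc, Fin.val_succ]
  gcongr
  exact_mod_cast Nat.le_succ _

lemma dist_le_of_mem_Icc_gridPoint (hT : 0 < T) {k : ℕ} (i : Fin (k + 1)) {x y : Icc 0 T}
    (hx : x ∈ Icc (gridPoint hT k i.castSucc) (gridPoint hT k i.succ))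
    (hy : y ∈ Icc (gridPoint hT k i.castSucc) (gridPoint hT k i.succ)) :
    dist x y ≤ T / (k + 1) := by
  rw [Subtype.dist_eq]
  refine (Real.dist_le_of_mem_Icc hx hy).trans_eq ?_
  simp only [gridPoint, Fin.val_castSucc, Fin.val_succ, Nat.cast_add, Nat.cast_one]
  ring

lemma exists_mem_Icc_gridPoint (hT : 0 < T) (k : ℕ) (t : Icc 0 T) :
    ∃ i : Fin (k + 1), t ∈ Icc (gridPoint hT k i.castSucc) (gridPoint hT k i.succ) ∧
      ((i : ℕ) : ℝ) ≤ (t : ℝ) * (k + 1) / T ∧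
      (t : ℝ) * (k + 1) / T ≤ (i : ℕ) + 1 := by
  obtain ⟨t, ht0, htT⟩ := t
  obtain ⟨i, hik, hi, hi1⟩ := exists_nat_le_le_succ (s := t * (k + 1) / T) (k := k)
    (by positivity) (by rw [div_le_iff₀ hT]; nlinarith)
  refine ⟨⟨i, Nat.lt_succ_of_le hik⟩, ⟨?_, ?_⟩, hi, hi1⟩ <;>
    simp only [← Subtype.coe_le_coe, gridPoint, Fin.val_castSucc, Fin.val_succ, Nat.cast_add,
      Nat.cast_one]
  · rw [le_div_iff₀ hT] at hi
    rw [div_le_iff₀ (by positivity)]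
    linarith
  · rw [div_le_iff₀ hT] at hi1
    rw [le_div_iff₀ (by positivity)]
    linarith

-- The hat function of the node `i * T / (k + 1)` (`= gridPoint hT k i`) of the uniform grid.
def tentAt (T : ℝ) (k : ℕ) (i : Fin (k + 2)) : C(Icc 0 T, ℝ) :=
  ⟨fun t => tent (t * (k + 1) / T - i), by unfold tent; fun_prop⟩

def gridInterpolation (T : ℝ) (k : ℕ) (a : Fin (k + 2) → ℝ) : C(Icc 0 T, ℝ) :=
  ∑ i, a i • tentAt T k i

@[fun_prop]
lemma continuous_gridInterpolation (k : ℕ) : Continuous (gridInterpolation T k) :=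
  continuous_finsetSum _ fun i _ => (continuous_apply i).smul continuous_const

lemma exists_gridInterpolation_mem_uIcc (hT : 0 < T) (k : ℕ) (t : Icc 0 T) :
    ∃ i : Fin (k + 1), t ∈ Icc (gridPoint hT k i.castSucc) (gridPoint hT k i.succ) ∧
      ∀ a, gridInterpolation T k a t ∈ uIcc (a i.castSucc) (a i.succ) := by
  obtain ⟨i, ht, hi, hi1⟩ := exists_mem_Icc_gridPoint hT k t
  refine ⟨i, ht, fun a => ?_⟩
  set θ : ℝ := (t : ℝ) * (k + 1) / T - (i : ℕ)
  have h : gridInterpolation T k a t = (1 - θ) * a i.castSucc + θ * a i.succ := by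
    simpa [gridInterpolation, tentAt] using sum_mul_tent_eq a i hi hi1
  rw [h, ← segment_eq_uIcc]
  exact ⟨1 - θ, θ, by linarith, by linarith, by ring, rfl⟩

def gridValues (hT : 0 < T) (k : ℕ) (u : C(Icc 0 T, ℝ)) : Fin (k + 2) → ℝ :=
  fun i => u (gridPoint hT k i)

@[fun_prop]
lemma continuous_gridValues (hT : 0 < T) (k : ℕ) : Continuous (gridValues hT k) :=
  continuous_pi fun i => continuous_eval_const (gridPoint hT k i)

def maxAbsIncrement (k : ℕ) (a : Fin (k + 2) → ℝ) : ℝ :=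
  Finset.univ.sup' Finset.univ_nonempty fun i : Fin (k + 1) => |a i.succ - a i.castSucc|

@[fun_prop]
lemma continuous_maxAbsIncrement (k : ℕ) : Continuous (maxAbsIncrement k) :=
  Continuous.finset_sup'_apply _ fun i _ => by fun_prop

lemma abs_sub_le_maxAbsIncrement {k : ℕ} (a : Fin (k + 2) → ℝ) (i : Fin (k + 1)) :
    |a i.succ - a i.castSucc| ≤ maxAbsIncrement k a :=
  Finset.le_sup' (fun i : Fin (k + 1) => |a i.succ - a i.castSucc|) (Finset.mem_univ i)

lemma maxAbsIncrement_nonneg {k : ℕ} (a : Fin (k + 2) → ℝ) : 0 ≤ maxAbsIncrement k a :=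
  (abs_nonneg _).trans (abs_sub_le_maxAbsIncrement a 0)

def gridApprox (hT : 0 < T) (k : ℕ) (u : C(Icc 0 T, ℝ)) : C(Icc 0 T, ℝ) :=
  gridInterpolation T k (gridValues hT k u)

@[fun_prop]
lemma continuous_gridApprox (hT : 0 < T) (k : ℕ) : Continuous (gridApprox hT k) :=
  (continuous_gridInterpolation k).comp (continuous_gridValues hT k)

lemma dist_gridApprox_le_maxAbsIncrement (hT : 0 < T) (k : ℕ) {u : C(Icc 0 T, ℝ)}
    (hu : Monotone u) :
    dist u (gridApprox hT k u) ≤ maxAbsIncrement k (gridValues hT k u) := by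
  refine (ContinuousMap.dist_le (maxAbsIncrement_nonneg _)).2 fun t => ?_
  obtain ⟨i, ht, hmem⟩ := exists_gridInterpolation_mem_uIcc hT k t
  have hut : u t ∈ uIcc (gridValues hT k u i.castSucc) (gridValues hT k u i.succ) :=
    Icc_subset_uIcc ⟨hu ht.1, hu ht.2⟩
  rw [Real.dist_eq, abs_sub_comm]
  exact (abs_sub_le_of_uIcc_subset_uIcc (uIcc_subset_uIcc hut (hmem _))).trans
    (abs_sub_le_maxAbsIncrement _ i)

lemma maxAbsIncrement_le_of_dist_le (hT : 0 < T) {k : ℕ} {u : C(Icc 0 T, ℝ)} {ε : ℝ}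
    (hu : ∀ a b : Icc 0 T, dist a b ≤ T / (k + 1) → dist (u a) (u b) ≤ ε) :
    maxAbsIncrement k (gridValues hT k u) ≤ ε := by
  refine Finset.sup'_le _ _ fun i _ => hu _ _ <| dist_le_of_mem_Icc_gridPoint hT i ?_ ?_
  · exact right_mem_Icc.2 (gridPoint_castSucc_le_succ hT i)
  · exact left_mem_Icc.2 (gridPoint_castSucc_le_succ hT i)

lemma dist_gridApprox_le_of_dist_le (hT : 0 < T) {k : ℕ} {u : C(Icc 0 T, ℝ)} {ε : ℝ}
    (hε : 0 ≤ ε)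
    (hu : ∀ a b : Icc 0 T, dist a b ≤ T / (k + 1) → dist (u a) (u b) ≤ ε) :
    dist u (gridApprox hT k u) ≤ ε := by
  refine (ContinuousMap.dist_le hε).2 fun t => ?_
  obtain ⟨i, ht, hmem⟩ := exists_gridInterpolation_mem_uIcc hT k t
  have hnear : ∀ j,
      gridPoint hT k j ∈ Icc (gridPoint hT k i.castSucc) (gridPoint hT k i.succ) →
      gridValues hT k u j ∈ Metric.closedBall (u t) ε := fun j hj => by
    rw [Metric.mem_closedBall, dist_comm]
    exact hu _ _ (dist_le_of_mem_Icc_gridPoint hT i ht hj)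
  have hle := gridPoint_castSucc_le_succ hT i
  have := uIcc_subset_Icc (Real.closedBall_eq_Icc ▸ hnear _ (left_mem_Icc.2 hle))
    (Real.closedBall_eq_Icc ▸ hnear _ (right_mem_Icc.2 hle)) (hmem _)
  rwa [← Real.closedBall_eq_Icc, Metric.mem_closedBall, dist_comm] at this

lemma eventually_dist_le_of_dist_le (u : C(Icc 0 T, ℝ)) {ε : ℝ} (hε : 0 < ε) :
    ∀ᶠ k : ℕ in atTop,
      ∀ a b : Icc 0 T, dist a b ≤ T / (k + 1) → dist (u a) (u b) ≤ ε := by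
  obtain ⟨δ, hδ, hu⟩ := Metric.uniformContinuous_iff.1
    (CompactSpace.uniformContinuous_of_continuous u.continuous) ε hε
  have hmesh : Tendsto (fun k : ℕ => T / (k + 1)) atTop (𝓝 0) := by
    simpa [Function.comp_def] using
      (tendsto_const_div_atTop_nhds_zero_nat T).comp (tendsto_add_atTop_nat 1)
  filter_upwards [hmesh.eventually (gt_mem_nhds hδ)] with k hk a b hab
  exact (hu (hab.trans_lt hk)).le

lemma tendsto_maxAbsIncrement_gridValues (hT : 0 < T) (u : C(Icc 0 T, ℝ)) :
    Tendsto (fun k => maxAbsIncrement k (gridValues hT k u)) atTop (𝓝 0) := by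
  refine tendsto_order.2
    ⟨fun ε hε => .of_forall fun _ => hε.trans_le (maxAbsIncrement_nonneg _),
      fun ε hε => ?_⟩
  filter_upwards [eventually_dist_le_of_dist_le u (half_pos hε)] with k hk
  exact (maxAbsIncrement_le_of_dist_le hT hk).trans_lt (half_lt_self hε)

lemma tendsto_dist_gridApprox (hT : 0 < T) (u : C(Icc 0 T, ℝ)) :
    Tendsto (fun k => dist u (gridApprox hT k u)) atTop (𝓝 0) := by
  refine tendsto_order.2 ⟨fun ε hε => .of_forall fun k => hε.trans_le dist_nonneg,
    fun ε hε => ?_⟩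
  filter_upwards [eventually_dist_le_of_dist_le u (half_pos hε)] with k hk
  exact (dist_gridApprox_le_of_dist_le hT (half_pos hε).le hk).trans_lt (half_lt_self hε)

lemma tendsto_of_forall_approx {ι : Type*} {l : Filter ι} {a : ι → ℝ} {b : ℝ}
    {g e : ℕ → ι → ℝ} {g' e' c : ℕ → ℝ}
    (hg : ∀ k, Tendsto (g k) l (𝓝 (g' k))) (he : ∀ k, Tendsto (e k) l (𝓝 (e' k)))
    (hag : ∀ k i, |a i - g k i| ≤ e k i) (hgb : ∀ k, |g' k - b| ≤ c k)
    (he' : Tendsto e' atTop (𝓝 0)) (hc : Tendsto c atTop (𝓝 0)) :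
    Tendsto a l (𝓝 b) := by
  refine Metric.tendsto_nhds.2 fun ε hε => ?_
  obtain ⟨k, hek, hck⟩ := ((he'.eventually (gt_mem_nhds (by positivity : 0 < ε / 4))).and
    (hc.eventually (gt_mem_nhds (by positivity : 0 < ε / 4)))).exists
  filter_upwards [Metric.tendsto_nhds.1 (hg k) (ε / 4) (by positivity),
    Metric.tendsto_nhds.1 (he k) (ε / 4) (by positivity)] with i hgi hei
  rw [Real.dist_eq] at hgi hei ⊢
  calc |a i - b| ≤ |a i - g k i| + |g k i - g' k| + |g' k - b| := by
        linarith [abs_sub_le (a i) (g k i) b, abs_sub_le (g k i) (g' k) b]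
    _ < ε := by linarith [hag k i, hgb k, (abs_lt.1 hei).2]

lemma min_mul_mem_Icc {C r : ℝ} (K : ℝ≥0) (hC : 0 ≤ C) (hr : 0 ≤ r) :
    min C (K * r) ∈ Icc 0 C :=
  ⟨le_min hC (by positivity), min_le_left _ _⟩

lemma abs_sub_le_min_mul_dist {E : Type*} [PseudoMetricSpace E] {f : E → ℝ} {C : ℝ}
    {K : ℝ≥0} (hC : ∀ x y, dist (f x) (f y) ≤ C) (hf : LipschitzWith K f) (x y : E) :
    |f x - f y| ≤ min C (K * dist x y) :=
  le_min (hC x y) (hf.dist_le_mul x y)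

lemma dist_min_mul_le {C r s : ℝ} (K : ℝ≥0) (hC : 0 ≤ C) (hr : 0 ≤ r) (hs : 0 ≤ s) :
    dist (min C (K * r)) (min C (K * s)) ≤ C := by
  simpa using Real.dist_le_of_mem_Icc (min_mul_mem_Icc K hC hr) (min_mul_mem_Icc K hC hs)

section Integrals

variable {Ω : Type*} [MeasurableSpace Ω] {P : Measure Ω}

lemma abs_integral_sub_integral_le {φ ψ χ : Ω → ℝ} (hφ : Integrable φ P)
    (hψ : Integrable ψ P) (hχ : Integrable χ P)
    (h : ∀ᵐ ω ∂P, |φ ω - ψ ω| ≤ χ ω) :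
    |∫ ω, φ ω ∂P - ∫ ω, ψ ω ∂P| ≤ ∫ ω, χ ω ∂P := by
  rw [← integral_sub hφ hψ]
  exact abs_integral_le_integral_abs.trans (integral_mono_ae (hφ.sub hψ).abs hχ h)

lemma integrable_comp_of_dist_le [IsFiniteMeasure P] {E : Type*} [TopologicalSpace E]
    [MeasurableSpace E] [OpensMeasurableSpace E] {φ : E → ℝ} (hφ : Continuous φ) {C : ℝ}
    (hC : ∀ x y, dist (φ x) (φ y) ≤ C) {Y : Ω → E} (hY : Measurable Y) :
    Integrable (fun ω => φ (Y ω)) P :=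
  ((BoundedContinuousFunction.mkOfBound ⟨φ, hφ⟩ C hC).integrable (P.map Y)).comp_measurable hY

lemma tendsto_integral_min_mul [IsFiniteMeasure P] {C : ℝ} (K : ℝ≥0) (hC : 0 ≤ C)
    {r : ℕ → Ω → ℝ} (hr_meas : ∀ k, AEStronglyMeasurable (r k) P)
    (hr0 : ∀ k ω, 0 ≤ r k ω)
    (hr : ∀ ω, Tendsto (fun k => r k ω) atTop (𝓝 0)) :
    Tendsto (fun k => ∫ ω, min C (K * r k ω) ∂P) atTop (𝓝 0) := by
  have hlim : ∀ ω, Tendsto (fun k => min C (K * r k ω)) atTop (𝓝 (min C (K * 0))) :=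
    fun ω => tendsto_const_nhds.min (tendsto_const_nhds.mul (hr ω))
  simp only [mul_zero, min_eq_right hC] at hlim
  simpa using tendsto_integral_of_dominated_convergence (F := fun k ω => min C (K * r k ω))
    (fun _ => C)
    (fun k => aestronglyMeasurable_const.inf ((hr_meas k).const_mul _)) (integrable_const C)
    (fun k => .of_forall fun ω => by
      rw [Real.norm_of_nonneg (min_mul_mem_Icc K hC (hr0 k ω)).1]
      exact min_le_left _ _)
    (.of_forall hlim)

end Integrals

section GridApproxIntegrals

variable (hT : 0 < T) {Ω : Type*} [MeasurableSpace Ω] {P : Measure Ω} [IsFiniteMeasure P]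
  [MeasurableSpace C(Icc 0 T, ℝ)] [OpensMeasurableSpace C(Icc 0 T, ℝ)]
  {f : C(Icc 0 T, ℝ) → ℝ} {C : ℝ} {K : ℝ≥0}

lemma abs_integral_sub_integral_gridApprox_le_of_monotone (hC : ∀ x y, dist (f x) (f y) ≤ C)
    (hf : LipschitzWith K f) {Y : Ω → C(Icc 0 T, ℝ)} (hY : Measurable Y)
    (hmono : ∀ᵐ ω ∂P, Monotone (Y ω)) (k : ℕ) :
    |∫ ω, f (Y ω) ∂P - ∫ ω, f (gridApprox hT k (Y ω)) ∂P| ≤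
      ∫ ω, min C (K * maxAbsIncrement k (gridValues hT k (Y ω))) ∂P := by
  have hC0 : 0 ≤ C := dist_nonneg.trans (hC 0 0)
  refine abs_integral_sub_integral_le (integrable_comp_of_dist_le hf.continuous hC hY)
    (integrable_comp_of_dist_le (φ := fun u => f (gridApprox hT k u))
      (hf.continuous.comp (continuous_gridApprox hT k)) (fun _ _ => hC _ _) hY)
    (integrable_comp_of_dist_le (φ := fun u => min C (K * maxAbsIncrement k (gridValues hT k u)))
      (by fun_prop) (fun _ _ => dist_min_mul_le K hC0 (maxAbsIncrement_nonneg _)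
        (maxAbsIncrement_nonneg _)) hY) ?_
  filter_upwards [hmono] with ω hω
  exact (abs_sub_le_min_mul_dist hC hf _ _).trans (min_le_min_left _
    (mul_le_mul_of_nonneg_left (dist_gridApprox_le_maxAbsIncrement hT k hω) K.coe_nonneg))

lemma abs_integral_gridApprox_sub_integral_le (hC : ∀ x y, dist (f x) (f y) ≤ C)
    (hf : LipschitzWith K f) {Y : Ω → C(Icc 0 T, ℝ)} (hY : Measurable Y) (k : ℕ) :
    |∫ ω, f (gridApprox hT k (Y ω)) ∂P - ∫ ω, f (Y ω) ∂P| ≤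
      ∫ ω, min C (K * dist (Y ω) (gridApprox hT k (Y ω))) ∂P := by
  have hC0 : 0 ≤ C := dist_nonneg.trans (hC 0 0)
  rw [abs_sub_comm]
  exact abs_integral_sub_integral_le (integrable_comp_of_dist_le hf.continuous hC hY)
    (integrable_comp_of_dist_le (φ := fun u => f (gridApprox hT k u))
      (hf.continuous.comp (continuous_gridApprox hT k)) (fun _ _ => hC _ _) hY)
    (integrable_comp_of_dist_le (φ := fun u => min C (K * dist u (gridApprox hT k u)))
      (by fun_prop) (fun _ _ => dist_min_mul_le K hC0 dist_nonneg dist_nonneg) hY)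
    (.of_forall fun ω => abs_sub_le_min_mul_dist hC hf _ _)

theorem tendsto_integral_of_monotone_of_tendsto_gridValues {ν : ℕ → Ω → C(Icc 0 T, ℝ)}
    {X : Ω → C(Icc 0 T, ℝ)} (hν : ∀ n, Measurable (ν n)) (hX : Measurable X)
    (hmono : ∀ n, ∀ᵐ ω ∂P, Monotone (ν n ω))
    (hfdd : ∀ (k : ℕ) (g : (Fin (k + 2) → ℝ) →ᵇ ℝ),
      Tendsto (fun n => ∫ ω, g (gridValues hT k (ν n ω)) ∂P) atTop
        (𝓝 (∫ ω, g (gridValues hT k (X ω)) ∂P)))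
    (hC : ∀ x y, dist (f x) (f y) ≤ C) (hf : LipschitzWith K f) :
    Tendsto (fun n => ∫ ω, f (ν n ω) ∂P) atTop (𝓝 (∫ ω, f (X ω) ∂P)) := by
  have hC0 : 0 ≤ C := dist_nonneg.trans (hC 0 0)
  refine tendsto_of_forall_approx
    (fun k => hfdd k (.mkOfBound ⟨fun a => f (gridInterpolation T k a),
      hf.continuous.comp (continuous_gridInterpolation k)⟩ C fun _ _ => hC _ _))
    (fun k => hfdd k (.mkOfBound ⟨fun a => min C (K * maxAbsIncrement k a), by fun_prop⟩ C
      fun a b => dist_min_mul_le K hC0 (maxAbsIncrement_nonneg a) (maxAbsIncrement_nonneg b)))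
    (fun k n => abs_integral_sub_integral_gridApprox_le_of_monotone hT hC hf (hν n) (hmono n) k)
    (abs_integral_gridApprox_sub_integral_le hT hC hf hX) ?_ ?_
  · exact tendsto_integral_min_mul K hC0
      (fun k => (((continuous_maxAbsIncrement k).comp (continuous_gridValues hT k)).measurable.comp
        hX).aestronglyMeasurable)
      (fun _ _ => maxAbsIncrement_nonneg _) fun ω => tendsto_maxAbsIncrement_gridValues hT (X ω)
  · exact tendsto_integral_min_mul K hC0
      (fun k => ((continuous_id.dist (continuous_gridApprox hT k)).measurable.comp
        hX).aestronglyMeasurable)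
      (fun _ _ => dist_nonneg) fun ω => tendsto_dist_gridApprox hT (X ω)

end GridApproxIntegrals

end

/-- If `ν n` are `C([0,T],ℝ)`-valued random variables which are almost surely nondecreasing
in time, `X` is a `C([0,T],ℝ)`-valued random variable, and the finite dimensional
distributions of `ν n` converge weakly to those of `X`, then the law of `ν n` converges
weakly (tested against all bounded continuous functions on `C([0,T],ℝ)` with the uniform
norm) to the law of `X`. -/
theorem stmt5 (T : ℝ) (hT : 0 < T) {Ω : Type*} [MeasurableSpace Ω]
    (P : Measure Ω) [IsProbabilityMeasure P]
    (ν : ℕ → Ω → C(Set.Icc (0 : ℝ) T, ℝ)) (X : Ω → C(Set.Icc (0 : ℝ) T, ℝ))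
    (hν : ∀ n, @Measurable Ω C(Set.Icc (0 : ℝ) T, ℝ) _ (borel _) (ν n))
    (hX : @Measurable Ω C(Set.Icc (0 : ℝ) T, ℝ) _ (borel _) X)
    (hmono : ∀ n, ∀ᵐ ω ∂P, Monotone (ν n ω))
    (hfdd : ∀ (k : ℕ) (t : Fin k → Set.Icc (0 : ℝ) T)
      (g : BoundedContinuousFunction (Fin k → ℝ) ℝ),
      Tendsto (fun n => ∫ ω, g (fun i => ν n ω (t i)) ∂P) atTop
        (nhds (∫ ω, g (fun i => X ω (t i)) ∂P))) :
    ∀ g : BoundedContinuousFunction C(Set.Icc (0 : ℝ) T, ℝ) ℝ,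
      Tendsto (fun n => ∫ ω, g (ν n ω) ∂P) atTop (nhds (∫ ω, g (X ω) ∂P)) := by
  let _ : MeasurableSpace C(Icc 0 T, ℝ) := borel _
  have : BorelSpace C(Icc 0 T, ℝ) := ⟨rfl⟩
  let law (Y : Ω → C(Icc 0 T, ℝ)) (hY : Measurable Y) : ProbabilityMeasure C(Icc 0 T, ℝ) :=
    ⟨P.map Y, Measure.isProbabilityMeasure_map hY.aemeasurable⟩
  have hlaw : Tendsto (fun n => law (ν n) (hν n)) atTop (𝓝 (law X hX)) := by
    refine tendsto_iff_forall_lipschitz_integral_tendsto.2 fun f ⟨C, hC⟩ ⟨K, hf⟩ => ?_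
    simp only [law, ProbabilityMeasure.coe_mk]
    rw [integral_map hX.aemeasurable hf.continuous.aestronglyMeasurable]
    simp_rw [integral_map (hν _).aemeasurable hf.continuous.aestronglyMeasurable]
    exact tendsto_integral_of_monotone_of_tendsto_gridValues hT hν hX hmono
      (fun k => hfdd (k + 2) (gridPoint hT k)) hC hf
  intro g
  simpa [law, integral_map (hν _).aemeasurable g.continuous.aestronglyMeasurable,
    integral_map hX.aemeasurable g.continuous.aestronglyMeasurable] using
    ProbabilityMeasure.tendsto_iff_forall_integral_tendsto.1 hlaw g
end

section
/- Suppose in addition that G = ℤ^d for some d ≥ 1 and that there exists M > 0 such that: (i) for L-almost every x ∈ M and every integer k ≥ 0, card{(s,u) ∈ [0,1)×[k,k+1) : s ≠ u and π_R(φ⁰_s(x,0)) = π_R(φ⁰_u(x,0))} ≤ M·1_{|h_k(x)| ≤ M}, where h_k := h(k,·) and |·| denotes the supremum norm on ℤ^d; and (ii) ∑_{k ≥ 0} L({x ∈ M : |h_k(x)| ≤ M}) < ∞. Then ∫_M I(x) dL(x) < ∞. -/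
open MeasureTheory
open scoped ENNReal

/-! The time-`[1, ∞)` part of the trajectory is covered by the blocks `[k, k+1)`, so `I` is
pointwise at most three times the sum of the block counts. By hypothesis (i) the `k`-th block
count is a.e. at most `M · 1_{|h_k| ≤ M}`, and integrating term by term bounds `∫ I` by
`3M ∑_k L(|h_k| ≤ M)`, which is finite by (ii). -/

theorem Set.encard_iUnion_le_tsum {α ι : Type*} (s : ι → Set α) :
    ((⋃ i, s i).encard : ℝ≥0∞) ≤ ∑' i, ((s i).encard : ℝ≥0∞) := by
  rw [← ENNReal.tsum_set_one]
  calc ∑' _ : ⋃ i, s i, (1 : ℝ≥0∞)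
      ≤ ∑' i, ∑' _ : s i, (1 : ℝ≥0∞) := ENNReal.tsum_iUnion_le_tsum (fun _ => 1) s
    _ = ∑' i, ((s i).encard : ℝ≥0∞) := by simp only [ENNReal.tsum_set_one]

theorem encard_Ico_Ici_le_tsum_encard_Ico (P : ℝ × ℝ → Prop) :
    ({p : ℝ × ℝ | p.1 ∈ Set.Ico (0 : ℝ) 1 ∧ p.2 ∈ Set.Ici (1 : ℝ) ∧ P p}.encard : ℝ≥0∞)
      ≤ ∑' k : ℕ, ({p : ℝ × ℝ | p.1 ∈ Set.Ico (0 : ℝ) 1 ∧ p.2 ∈ Set.Ico (k : ℝ) ((k : ℝ) + 1) ∧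
          p.1 ≠ p.2 ∧ P p}.encard : ℝ≥0∞) := by
  refine le_trans ?_ (Set.encard_iUnion_le_tsum _)
  refine ENat.toENNReal_le.mpr (Set.encard_le_encard fun p ⟨hp1, hp2, hP⟩ => ?_)
  have hp2 : (1 : ℝ) ≤ p.2 := hp2
  refine Set.mem_iUnion.mpr ⟨⌊p.2⌋₊, hp1, ⟨?_, ?_⟩, (hp1.2.trans_le hp2).ne, hP⟩
  · exact Nat.floor_le (zero_le_one.trans hp2)
  · exact Nat.lt_floor_add_one p.2

theorem MeasureTheory.lintegral_tsum_le_of_ae_le_indicator {α ι : Type*} [MeasurableSpace α]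
    [Countable ι] {μ : Measure α} {f : ι → α → ℝ≥0∞} {s : ι → Set α} {c : ℝ≥0∞}
    (hf : ∀ᵐ x ∂μ, ∀ i, f i x ≤ (s i).indicator (fun _ => c) x) :
    ∫⁻ x, ∑' i, f i x ∂μ ≤ c * ∑' i, μ (s i) := by
  -- `s i` need not be measurable; its measurable hull has the same measure.
  calc ∫⁻ x, ∑' i, f i x ∂μ
      ≤ ∫⁻ x, ∑' i, (toMeasurable μ (s i)).indicator (fun _ => c) x ∂μ := by
        refine lintegral_mono_ae ?_
        filter_upwards [hf] with x hx
        exact ENNReal.tsum_le_tsum fun i =>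
          (hx i).trans (Set.indicator_le_indicator_of_subset (subset_toMeasurable μ (s i))
            (fun _ => zero_le) x)
    _ = ∑' i, c * μ (s i) := by
        rw [lintegral_tsum fun i =>
          (measurable_const.indicator (measurableSet_toMeasurable μ (s i))).aemeasurable]
        simp only [lintegral_indicator_const (measurableSet_toMeasurable μ _),
          measure_toMeasurable]
    _ = c * ∑' i, μ (s i) := ENNReal.tsum_mul_left

theorem stmt7_general {M R : Type*} [MeasurableSpace M] (d : ℕ)
    (L : Measure M)
    (φ : ℝ → M → M)
    (h : ℝ → M → (Fin d → ℤ))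
    (π : M × (Fin d → ℤ) → R)
    (Mb : ℝ)
    (hbound : ∀ᵐ x ∂L, ∀ k : ℕ,
      (({p : ℝ × ℝ | p.1 ∈ Set.Ico (0 : ℝ) 1 ∧ p.2 ∈ Set.Ico (k : ℝ) ((k : ℝ) + 1) ∧
          p.1 ≠ p.2 ∧ π (φ p.1 x, h p.1 x) = π (φ p.2 x, h p.2 x)}.encard : ℝ≥0∞))
        ≤ if ∀ i : Fin d, (|h (k : ℝ) x i| : ℝ) ≤ Mb then ENNReal.ofReal Mb else 0)
    (hsum : (∑' k : ℕ, L {x : M | ∀ i : Fin d, (|h (k : ℝ) x i| : ℝ) ≤ Mb}) < ⊤) :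
    (∫⁻ (x : M),
      (({p : ℝ × ℝ | p.1 ∈ Set.Ico (0 : ℝ) 1 ∧ p.2 ∈ Set.Ico (0 : ℝ) 1 ∧ p.1 ≠ p.2 ∧
          π (φ p.1 x, h p.1 x) = π (φ p.2 x, h p.2 x)}.encard : ℝ≥0∞)
        + 2 * ({p : ℝ × ℝ | p.1 ∈ Set.Ico (0 : ℝ) 1 ∧ p.2 ∈ Set.Ici (1 : ℝ) ∧
          π (φ p.1 x, h p.1 x) = π (φ p.2 x, h p.2 x)}.encard : ℝ≥0∞)) ∂L) < ⊤ := by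
  set F : ℕ → M → ℝ≥0∞ := fun k x =>
    ({p : ℝ × ℝ | p.1 ∈ Set.Ico (0 : ℝ) 1 ∧ p.2 ∈ Set.Ico (k : ℝ) ((k : ℝ) + 1) ∧
      p.1 ≠ p.2 ∧ π (φ p.1 x, h p.1 x) = π (φ p.2 x, h p.2 x)}.encard : ℝ≥0∞)
  have hF : ∀ᵐ x ∂L, ∀ k, F k x ≤
      {x | ∀ i : Fin d, (|h (k : ℝ) x i| : ℝ) ≤ Mb}.indicator (fun _ => ENNReal.ofReal Mb) x := by
    filter_upwards [hbound] with x hx k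
    simpa only [Set.indicator_apply, Set.mem_ofPred_eq] using hx k
  have hI : ∀ x, F 0 x + 2 * ({p : ℝ × ℝ | p.1 ∈ Set.Ico (0 : ℝ) 1 ∧ p.2 ∈ Set.Ici (1 : ℝ) ∧
      π (φ p.1 x, h p.1 x) = π (φ p.2 x, h p.2 x)}.encard : ℝ≥0∞) ≤ 3 * ∑' k, F k x := fun x =>
    calc _ ≤ ∑' k, F k x + 2 * ∑' k, F k x :=
          add_le_add (ENNReal.le_tsum 0) (mul_le_mul_right (encard_Ico_Ici_le_tsum_encard_Ico _) 2)
      _ = 3 * ∑' k, F k x := by ring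
  calc _ ≤ ∫⁻ x, 3 * ∑' k, F k x ∂L := lintegral_mono fun x => by
          simpa only [F, Nat.cast_zero, zero_add] using hI x
    _ = 3 * ∫⁻ x, ∑' k, F k x ∂L := lintegral_const_mul' 3 _ ENNReal.ofNat_ne_top
    _ ≤ 3 * (ENNReal.ofReal Mb * ∑' k : ℕ, L {x : M | ∀ i : Fin d, (|h (k : ℝ) x i| : ℝ) ≤ Mb}) :=
          mul_le_mul_right (lintegral_tsum_le_of_ae_le_indicator hF) 3
    _ < ⊤ := ENNReal.mul_lt_top ENNReal.ofNat_lt_top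
          (ENNReal.mul_lt_top ENNReal.ofReal_lt_top hsum)

/-- For a `ℤ^d`-extension (`d ≥ 1`) of an ergodic probability-preserving flow, if the
number of intersections of the time-`[0,1)` trajectory with the time-`[k,k+1)` trajectory
is bounded by `M·1_{|h_k| ≤ M}` (sup norm on `ℤ^d`) and `∑_k L(|h_k| ≤ M) < ∞`, then the
mean self-intersection count `∫_M I dL` is finite. -/
theorem stmt7 {M R : Type*} [MeasurableSpace M] (d : ℕ) (hd : 1 ≤ d)
    (L : Measure M) [IsProbabilityMeasure L]
    (φ : ℝ → M → M)
    (hφmeas : Measurable (fun p : ℝ × M => φ p.1 p.2))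
    (hφ0 : φ 0 = id)
    (hφflow : ∀ s t : ℝ, φ (t + s) = φ t ∘ φ s)
    (hφpres : ∀ t : ℝ, MeasurePreserving (φ t) L L)
    (hErg : ∀ A : Set M, MeasurableSet A → (∀ t : ℝ, φ t ⁻¹' A = A) → L A = 0 ∨ L A = 1)
    (h : ℝ → M → (Fin d → ℤ))
    (hhmeas : Measurable (fun p : ℝ × M => h p.1 p.2))
    (hcoc : ∀ s t : ℝ, ∀ x : M, h (t + s) x = h t x + h s (φ t x))
    (π : M × (Fin d → ℤ) → R)
    (hπ : ∀ (x x' : M) (a a' : Fin d → ℤ), π (x, a) = π (x', a') ↔ π (x, 0) = π (x', a' - a))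
    (hmeasblock : ∀ k m : ℕ, Measurable (fun x : M =>
      (({p : ℝ × ℝ | p.1 ∈ Set.Ico (m : ℝ) ((m : ℝ) + 1) ∧ p.2 ∈ Set.Ico (k : ℝ) ((k : ℝ) + 1) ∧
          p.1 ≠ p.2 ∧ π (φ p.1 x, h p.1 x) = π (φ p.2 x, h p.2 x)}.encard : ℝ≥0∞))))
    (Mb : ℝ) (hMb : 0 < Mb)
    (hbound : ∀ᵐ x ∂L, ∀ k : ℕ,
      (({p : ℝ × ℝ | p.1 ∈ Set.Ico (0 : ℝ) 1 ∧ p.2 ∈ Set.Ico (k : ℝ) ((k : ℝ) + 1) ∧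
          p.1 ≠ p.2 ∧ π (φ p.1 x, h p.1 x) = π (φ p.2 x, h p.2 x)}.encard : ℝ≥0∞))
        ≤ if ∀ i : Fin d, (|h (k : ℝ) x i| : ℝ) ≤ Mb then ENNReal.ofReal Mb else 0)
    (hsum : (∑' k : ℕ, L {x : M | ∀ i : Fin d, (|h (k : ℝ) x i| : ℝ) ≤ Mb}) < ⊤) :
    (∫⁻ (x : M),
      (({p : ℝ × ℝ | p.1 ∈ Set.Ico (0 : ℝ) 1 ∧ p.2 ∈ Set.Ico (0 : ℝ) 1 ∧ p.1 ≠ p.2 ∧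
          π (φ p.1 x, h p.1 x) = π (φ p.2 x, h p.2 x)}.encard : ℝ≥0∞)
        + 2 * ({p : ℝ × ℝ | p.1 ∈ Set.Ico (0 : ℝ) 1 ∧ p.2 ∈ Set.Ici (1 : ℝ) ∧
          π (φ p.1 x, h p.1 x) = π (φ p.2 x, h p.2 x)}.encard : ℝ≥0∞)) ∂L) < ⊤ :=
  stmt7_general d L φ h π Mb hbound hsum
end

section
/- Assume there is a constant C > 0 such that μ(S_u = 0) ≤ C·u^{−1/2} for every integer u ≥ 1. Then there is a constant C' > 0 such that for every n ≥ 1, E_μ( ∑_{x ∈ ℤ} N_n(x)² ) ≤ C'·n^{3/2}. -/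
open MeasureTheory Filter
open scoped ENNReal

/-- Birkhoff sums `S_n = ∑_{k=0}^{n-1} φ ∘ T^k`. -/
def birkS {Ω : Type*} (T : Ω → Ω) (φ : Ω → ℤ) (n : ℕ) (ω : Ω) : ℤ :=
  ∑ k ∈ Finset.range n, φ (T^[k] ω)

/-- Local time `N_n(x) = ∑_{i=0}^{n-1} 1_{S_i = x}`. -/
def locN {Ω : Type*} (T : Ω → Ω) (φ : Ω → ℤ) (n : ℕ) (x : ℤ) (ω : Ω) : ℕ :=
  ∑ i ∈ Finset.range n, if birkS T φ i ω = x then 1 else 0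

/-! Expanding the square, `∑ₓ N_n(x)²` counts the pairs `(i, j) ∈ [0, n)²` with `S_i = S_j`.
The cocycle identity `S_{i+m} = S_i + S_m ∘ T^i` and the invariance of `μ` give
`μ(S_i = S_j) = μ(S_{|i-j|} = 0)`, so the expectation is at most
`2n ∑_{u<n} μ(S_u = 0) ≤ 2n (1 + 2C√n) ≤ (2 + 4C) n^{3/2}`. -/

open Finset

section BirkhoffSums

variable {Ω : Type*} {T : Ω → Ω} {φ : Ω → ℤ}

theorem birkS_add (i m : ℕ) (ω : Ω) :
    birkS T φ (i + m) ω = birkS T φ i ω + birkS T φ m (T^[i] ω) := by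
  simp only [birkS, sum_range_add, ← Function.iterate_add_apply]
  exact congrArg _ (sum_congr rfl fun k _ => by rw [Nat.add_comm])

theorem locN_eq_card (n : ℕ) (x : ℤ) (ω : Ω) :
    locN T φ n x ω = #{i ∈ range n | birkS T φ i ω = x} :=
  (card_filter _ _).symm

variable [MeasurableSpace Ω]

theorem measurable_birkS (hT : Measurable T) (hφ : Measurable φ) (n : ℕ) :
    Measurable (birkS T φ n) :=
  Finset.measurable_sum _ fun k _ => hφ.comp (hT.iterate k)

theorem measure_birkS_eq_birkS {μ : Measure Ω} (hT : MeasurePreserving T μ μ)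
    (hφ : Measurable φ) (i j : ℕ) :
    μ {ω | birkS T φ i ω = birkS T φ j ω} = μ {ω | birkS T φ (i.dist j) ω = 0} := by
  wlog hij : i ≤ j generalizing i j
  · simpa only [eq_comm, Nat.dist_comm] using this j i (le_of_not_ge hij)
  obtain ⟨m, rfl⟩ := Nat.exists_eq_add_of_le hij
  have hset : {ω | birkS T φ i ω = birkS T φ (i + m) ω}
      = T^[i] ⁻¹' {ω | birkS T φ m ω = 0} := by
    ext ω
    simp only [Set.mem_ofPred_eq, Set.mem_preimage, birkS_add]
    omega
  rw [hset, Nat.dist_eq_sub_of_le hij, Nat.add_sub_cancel_left]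
  exact (hT.iterate i).measure_preimage
    (measurableSet_eq_fun (measurable_birkS hT.measurable hφ m) measurable_const).nullMeasurableSet

end BirkhoffSums

section Collisions

variable {ι β : Type*} [DecidableEq β]

theorem tsum_card_filter_eq_sq (s : Finset ι) (f : ι → β) :
    ∑' x, (#{i ∈ s | f i = x} : ℝ≥0∞) ^ 2 = ∑ i ∈ s, ∑ j ∈ s, if f i = f j then 1 else 0 := by
  have hsq : ∀ x, (#{i ∈ s | f i = x} : ℝ≥0∞) ^ 2
      = ∑ i ∈ s, ∑ j ∈ s, if f i = x ∧ f j = x then 1 else 0 := by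
    intro x
    simp only [card_filter, Nat.cast_sum, Nat.cast_ite, Nat.cast_one, Nat.cast_zero, sq,
      sum_mul_sum, ite_zero_mul_ite_zero, mul_one]
  simp only [hsq, Summable.tsum_finsetSum fun _ _ => ENNReal.summable]
  refine sum_congr rfl fun i _ => sum_congr rfl fun j _ => ?_
  rw [tsum_eq_single (f i) fun x hx => if_neg fun h => hx h.1.symm]
  simp only [true_and, eq_comm]

theorem lintegral_tsum_card_filter_eq_sq {Ω : Type*} [MeasurableSpace Ω] (μ : Measure Ω)
    (s : Finset ι) {f : ι → Ω → β} (hf : ∀ i j, MeasurableSet {ω | f i ω = f j ω}) :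
    ∫⁻ ω, ∑' x, (#{i ∈ s | f i ω = x} : ℝ≥0∞) ^ 2 ∂μ
      = ∑ i ∈ s, ∑ j ∈ s, μ {ω | f i ω = f j ω} := by
  have hind : ∀ i j ω, (if f i ω = f j ω then 1 else 0 : ℝ≥0∞)
      = {ω | f i ω = f j ω}.indicator 1 ω := fun _ _ _ => by
    simp only [Set.indicator_apply, Set.mem_ofPred_eq, Pi.one_apply]
  simp only [tsum_card_filter_eq_sq, hind]
  rw [lintegral_finsetSum _ fun i _ => Finset.measurable_sum _ fun j _ =>
    measurable_one.indicator (hf i j)]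
  refine sum_congr rfl fun i _ => ?_
  rw [lintegral_finsetSum _ fun j _ => measurable_one.indicator (hf i j)]
  exact sum_congr rfl fun j _ => lintegral_indicator_one (hf i j)

end Collisions

section Sums

theorem sum_range_dist_le {M : Type*} [AddCommMonoid M] [PartialOrder M] [CanonicallyOrderedAdd M]
    [IsOrderedAddMonoid M] (a : ℕ → M) {i n : ℕ} (hi : i < n) :
    ∑ j ∈ range n, a (i.dist j) ≤ 2 • ∑ u ∈ range n, a u := by
  have hleft : ∑ j ∈ range (i + 1), a (i.dist j) ≤ ∑ u ∈ range n, a u := by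
    rw [← sum_range_reflect]
    refine le_of_eq_of_le (sum_congr rfl fun j hj => ?_)
      (sum_le_sum_of_subset (range_subset_range.2 hi))
    rw [Nat.add_sub_cancel, Nat.dist_eq_sub_of_le_right (Nat.sub_le i j),
      Nat.sub_sub_self (Nat.lt_succ_iff.1 (mem_range.1 hj))]
  have hright : ∑ j ∈ Ico i n, a (i.dist j) ≤ ∑ u ∈ range n, a u := by
    rw [sum_Ico_eq_sum_range]
    refine le_of_eq_of_le (sum_congr rfl fun k _ => ?_)
      (sum_le_sum_of_subset (range_subset_range.2 (Nat.sub_le n i)))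
    rw [Nat.dist_eq_sub_of_le (Nat.le_add_right i k), Nat.add_sub_cancel_left]
  calc ∑ j ∈ range n, a (i.dist j)
      = ∑ j ∈ range i, a (i.dist j) + ∑ j ∈ Ico i n, a (i.dist j) :=
        (sum_range_add_sum_Ico _ hi.le).symm
    _ ≤ ∑ j ∈ range (i + 1), a (i.dist j) + ∑ j ∈ Ico i n, a (i.dist j) := by
        grw [sum_le_sum_of_subset (f := fun j => a (i.dist j)) (range_subset_range.2 i.le_succ)]
    _ ≤ 2 • ∑ u ∈ range n, a u := by
        rw [two_nsmul]; exact add_le_add hleft hright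

theorem sum_range_rpow_neg_half_le (m : ℕ) :
    ∑ k ∈ range m, ((k + 1 : ℕ) : ℝ) ^ (-(1 : ℝ) / 2) ≤ 2 * √m := by
  have hstep : ∀ k : ℕ, ((k + 1 : ℕ) : ℝ) ^ (-(1 : ℝ) / 2) ≤ 2 * √(k + 1 : ℕ) - 2 * √k := by
    intro k
    have hk : (0 : ℝ) < (k + 1 : ℕ) := by positivity
    have ht : 0 < √(k + 1 : ℕ) := Real.sqrt_pos.2 hk
    have hs : √k ≤ √(k + 1 : ℕ) := Real.sqrt_le_sqrt (by push_cast; linarith)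
    rw [neg_div, Real.rpow_neg hk.le, ← Real.sqrt_eq_rpow, inv_le_iff_one_le_mul₀' ht]
    have hts : √(k + 1 : ℕ) ^ 2 - √k ^ 2 = 1 := by
      rw [Real.sq_sqrt hk.le, Real.sq_sqrt k.cast_nonneg]; push_cast; ring
    nlinarith
  calc ∑ k ∈ range m, ((k + 1 : ℕ) : ℝ) ^ (-(1 : ℝ) / 2)
      ≤ ∑ k ∈ range m, (2 * √(k + 1 : ℕ) - 2 * √k) := sum_le_sum fun k _ => hstep k
    _ = 2 * √m := by
        rw [sum_range_sub (fun k : ℕ => 2 * √k)]; simp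

theorem sum_range_le_of_le_rpow_neg_half {a : ℕ → ℝ≥0∞} {C : ℝ} (hC : 0 ≤ C) (h0 : a 0 ≤ 1)
    (ha : ∀ u : ℕ, 1 ≤ u → a u ≤ ENNReal.ofReal (C * (u : ℝ) ^ (-(1 : ℝ) / 2))) (n : ℕ) :
    ∑ u ∈ range n, a u ≤ ENNReal.ofReal (1 + 2 * C * √n) := by
  have htail : ∑ k ∈ range n, a (k + 1) ≤ ENNReal.ofReal (2 * C * √n) := calc
      _ ≤ ∑ k ∈ range n, ENNReal.ofReal (C * ((k + 1 : ℕ) : ℝ) ^ (-(1 : ℝ) / 2)) :=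
          sum_le_sum fun k _ => ha (k + 1) k.succ_pos
      _ = ENNReal.ofReal (C * ∑ k ∈ range n, ((k + 1 : ℕ) : ℝ) ^ (-(1 : ℝ) / 2)) := by
          rw [mul_sum, ENNReal.ofReal_sum_of_nonneg fun k _ => by positivity]
      _ ≤ ENNReal.ofReal (2 * C * √n) := by
          refine ENNReal.ofReal_le_ofReal ?_
          linarith [mul_le_mul_of_nonneg_left (sum_range_rpow_neg_half_le n) hC]
  calc ∑ u ∈ range n, a u
      ≤ ∑ u ∈ range (n + 1), a u := sum_le_sum_of_subset (range_subset_range.2 n.le_succ)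
    _ = ∑ k ∈ range n, a (k + 1) + a 0 := sum_range_succ' a n
    _ ≤ ENNReal.ofReal (2 * C * √n) + ENNReal.ofReal 1 := by
        rw [ENNReal.ofReal_one]; exact add_le_add htail h0
    _ = ENNReal.ofReal (1 + 2 * C * √n) := by
        rw [← ENNReal.ofReal_add (by positivity) zero_le_one, add_comm]

end Sums

/-- If `μ(S_u = 0) ≤ C u^{-1/2}` for all `u ≥ 1`, then there is `C' > 0` with
`E_μ(∑_{x ∈ ℤ} N_n(x)²) ≤ C' n^{3/2}` for all `n ≥ 1`. -/
theorem stmt8 {Ω : Type*} [MeasurableSpace Ω] (μ : Measure Ω) [IsProbabilityMeasure μ]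
    (T : Ω → Ω) (hT : MeasurePreserving T μ μ)
    (φ : Ω → ℤ) (hφ : Measurable φ)
    (C : ℝ) (hC : 0 < C)
    (hloc : ∀ u : ℕ, 1 ≤ u →
      μ {ω : Ω | birkS T φ u ω = 0} ≤ ENNReal.ofReal (C * (u : ℝ) ^ (-(1 : ℝ) / 2))) :
    ∃ C' : ℝ, 0 < C' ∧ ∀ n : ℕ, 1 ≤ n →
      (∫⁻ ω, ∑' x : ℤ, ((locN T φ n x ω : ℝ≥0∞)) ^ 2 ∂μ)
        ≤ ENNReal.ofReal (C' * (n : ℝ) ^ ((3 : ℝ) / 2)) := by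
  refine ⟨2 + 4 * C, by positivity, fun n hn => ?_⟩
  have hS := measurable_birkS hT.measurable hφ
  have hreturn := sum_range_le_of_le_rpow_neg_half hC.le prob_le_one hloc n
  have hsqrt : (1 : ℝ) ≤ √n := Real.one_le_sqrt.2 (by exact_mod_cast hn)
  calc ∫⁻ ω, ∑' x : ℤ, ((locN T φ n x ω : ℝ≥0∞)) ^ 2 ∂μ
      = ∑ i ∈ range n, ∑ j ∈ range n, μ {ω | birkS T φ (i.dist j) ω = 0} := by
        simp only [locN_eq_card, ← measure_birkS_eq_birkS hT hφ]
        exact lintegral_tsum_card_filter_eq_sq μ _ fun i j => measurableSet_eq_fun (hS i) (hS j)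
    _ ≤ ∑ _i ∈ range n, 2 • ∑ u ∈ range n, μ {ω | birkS T φ u ω = 0} :=
        sum_le_sum fun i hi =>
          sum_range_dist_le (fun u => μ {ω | birkS T φ u ω = 0}) (mem_range.1 hi)
    _ ≤ n * (2 * ENNReal.ofReal (1 + 2 * C * √n)) := by
        rw [sum_const, card_range, nsmul_eq_mul, two_nsmul, ← two_mul]; gcongr
    _ = ENNReal.ofReal (n * (2 * (1 + 2 * C * √n))) := by
        rw [ENNReal.ofReal_mul n.cast_nonneg, ENNReal.ofReal_mul zero_le_two,
          ENNReal.ofReal_natCast, ENNReal.ofReal_ofNat]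
    _ ≤ ENNReal.ofReal ((2 + 4 * C) * (n : ℝ) ^ ((3 : ℝ) / 2)) := by
        refine ENNReal.ofReal_le_ofReal ?_
        rw [show (3 : ℝ) / 2 = 1 + 1 / 2 by norm_num, Real.rpow_add' n.cast_nonneg (by norm_num),
          Real.rpow_one, ← Real.sqrt_eq_rpow]
        nlinarith [mul_le_mul_of_nonneg_left hsqrt (by positivity : (0 : ℝ) ≤ n)]
end

section
/- Assume: (i) there is a constant C > 0 such that for all n ≥ 1 and all x, y ∈ ℤ, E_μ( |N_n(x) − N_n(y)|² ) ≤ C·n^{1/2}·|x − y|; and (ii) there is a constant K > 0 such that for every n ≥ 2, E_μ( max_{0 ≤ k ≤ n} S_k² ) ≤ K·n·log n. Then for every l ∈ ℤ, ∑_{x ∈ ℤ} E_μ( |N_n(x) − N_n(x+l)|² ) = o(n^{3/2}) as n → ∞, i.e. n^{−3/2}·∑_{x ∈ ℤ} E_μ( |N_n(x) − N_n(x+l)|² ) → 0. -/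
open MeasureTheory Filter
open scoped ENNReal

/-!
Split the sum over `x` at the window `|x| ≤ M + |l|`, where `M = ⌈n^{7/8}⌉` (any exponent in
`(3/4, 1)` works). On the window, (i) bounds each of its `O(M)` terms by `C n^{1/2} |l|`, which
gives `O(n^{11/8})`. Off the window, `N_n(x)` and `N_n(x + l)` vanish unless the walk leaves
`[-M, M]` before time `n`. Since `(N_n(x) - N_n(x + l))² ≤ n (N_n(x) + N_n(x + l))` and
`∑_x N_n(x) = n`, the tail is at most `2n² · 1{max S_k² > M²} ≤ 2n² max S_k² / M²`, whose
expectation is `O(n³ log n / M²) = O(n^{5/4} log n)` by (ii).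
-/

open Finset Topology

lemma tsum_lintegral_le_lintegral_tsum {α ι : Type*} [MeasurableSpace α] (μ : Measure α)
    (f : ι → α → ℝ≥0∞) : ∑' i, ∫⁻ a, f i a ∂μ ≤ ∫⁻ a, ∑' i, f i a ∂μ := by
  rw [ENNReal.tsum_eq_iSup_sum]
  refine iSup_le fun s => le_trans ?_ (lintegral_mono fun a => ENNReal.sum_le_tsum s)
  induction s using Finset.cons_induction with
  | empty => simp
  | cons i s hi ih =>
    simp only [sum_cons]
    exact (add_le_add_right ih _).trans (le_lintegral_add _ _)

section LocalTime

variable {Ω : Type*} (T : Ω → Ω) (φ : Ω → ℤ) (n : ℕ) (ω : Ω)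

lemma locN_le (x : ℤ) : locN T φ n x ω ≤ n := by
  simpa [locN] using card_filter_le (range n) (fun i => birkS T φ i ω = x)

lemma locN_eq_zero_of_forall_ne {x : ℤ} (h : ∀ i < n, birkS T φ i ω ≠ x) :
    locN T φ n x ω = 0 :=
  Finset.sum_eq_zero fun i hi => if_neg (h i (mem_range.mp hi))

lemma tsum_locN : ∑' x : ℤ, (locN T φ n x ω : ℝ≥0∞) = n := by
  simp only [locN, Nat.cast_sum, Nat.cast_ite, Nat.cast_one, Nat.cast_zero]
  rw [Summable.tsum_finsetSum fun _ _ => ENNReal.summable]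
  simp

lemma tsum_locN_add_right (l : ℤ) : ∑' x : ℤ, (locN T φ n (x + l) ω : ℝ≥0∞) = n :=
  ((Equiv.addRight l).tsum_eq fun x => (locN T φ n x ω : ℝ≥0∞)).trans (tsum_locN T φ n ω)

lemma ofReal_sq_sub_locN_le (x y : ℤ) :
    ENNReal.ofReal (((locN T φ n x ω : ℝ) - locN T φ n y ω) ^ 2)
      ≤ n * (locN T φ n x ω + locN T φ n y ω) := by
  have hx : (locN T φ n x ω : ℝ) ≤ n := by exact_mod_cast locN_le T φ n ω x
  have hy : (locN T φ n y ω : ℝ) ≤ n := by exact_mod_cast locN_le T φ n ω y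
  calc ENNReal.ofReal (((locN T φ n x ω : ℝ) - locN T φ n y ω) ^ 2)
      ≤ ENNReal.ofReal ((n * (locN T φ n x ω + locN T φ n y ω) : ℕ) : ℝ) := by
        refine ENNReal.ofReal_le_ofReal ?_
        push_cast
        nlinarith [(locN T φ n x ω).cast_nonneg (α := ℝ), (locN T φ n y ω).cast_nonneg (α := ℝ)]
    _ = n * (locN T φ n x ω + locN T φ n y ω) := by
        rw [ENNReal.ofReal_natCast]
        norm_cast

noncomputable def maxSqBirkS : ℝ :=
  (range (n + 1)).sup' (nonempty_range_iff.mpr (Nat.succ_ne_zero n))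
    (fun k => (birkS T φ k ω : ℝ) ^ 2)

lemma sq_birkS_le_maxSqBirkS {i : ℕ} (hi : i ≤ n) :
    (birkS T φ i ω : ℝ) ^ 2 ≤ maxSqBirkS T φ n ω :=
  le_sup' (fun k => (birkS T φ k ω : ℝ) ^ 2) (mem_range.mpr (Nat.lt_succ_of_le hi))

end LocalTime

noncomputable def window (M : ℕ) (l : ℤ) : Finset ℤ := Icc (-(M + |l|)) (M + |l|)

lemma lt_abs_of_notMem_window {M : ℕ} {l x : ℤ} (hx : x ∉ window M l) : M + |l| < |x| := by
  rw [window, mem_Icc, not_and_or, not_le, not_le] at hx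
  exact lt_abs.mpr (hx.symm.imp id fun h => by linarith)

lemma card_window (M : ℕ) (l : ℤ) : (#(window M l) : ℝ) = 2 * (M + |(l : ℝ)|) + 1 := by
  have h : (#(window M l) : ℤ) = 2 * (M + |l|) + 1 := by
    rw [window, Int.card_Icc, Int.toNat_of_nonneg (by linarith [abs_nonneg l])]
    ring
  exact_mod_cast h

section Tail

variable {Ω : Type*} (T : Ω → Ω) (φ : Ω → ℤ) (n : ℕ) {M : ℕ} (l : ℤ)

lemma tsum_compl_window_ofReal_sq_sub_locN_le (hM : 0 < M) (ω : Ω) :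
    ∑' x : ↥(window M l : Set ℤ)ᶜ,
        ENNReal.ofReal (((locN T φ n x ω : ℝ) - locN T φ n (x + l) ω) ^ 2)
      ≤ ENNReal.ofReal (2 * n ^ 2 / M ^ 2) * ENNReal.ofReal (maxSqBirkS T φ n ω) := by
  by_cases hvisit : ∀ i < n, |birkS T φ i ω| ≤ M
  · have hfar : ∀ y : ℤ, (M : ℤ) < |y| → locN T φ n y ω = 0 := fun y hy =>
      locN_eq_zero_of_forall_ne T φ n ω fun i hi heq => by
        have := hvisit i hi
        rw [heq] at this
        linarith
    refine le_of_eq_of_le (ENNReal.tsum_eq_zero.mpr fun x => ?_) zero_le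
    have hx := lt_abs_of_notMem_window x.2
    have hxl : |(x : ℤ)| ≤ |x + l| + |l| := by simpa using abs_sub (x + l) l
    rw [hfar x (by linarith [abs_nonneg l]), hfar (x + l) (by linarith)]
    simp
  · push Not at hvisit
    obtain ⟨i, hi, hMi⟩ := hvisit
    have hmax : (M : ℝ) ^ 2 ≤ maxSqBirkS T φ n ω := by
      have hMi : (M : ℝ) < |(birkS T φ i ω : ℝ)| := by exact_mod_cast hMi
      refine le_trans ?_ (sq_birkS_le_maxSqBirkS T φ n ω hi.le)
      rw [← sq_abs (birkS T φ i ω : ℝ)]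
      exact pow_le_pow_left₀ (Nat.cast_nonneg M) hMi.le 2
    calc ∑' x : ↥(window M l : Set ℤ)ᶜ,
          ENNReal.ofReal (((locN T φ n x ω : ℝ) - locN T φ n (x + l) ω) ^ 2)
        ≤ ∑' x : ℤ, ENNReal.ofReal (((locN T φ n x ω : ℝ) - locN T φ n (x + l) ω) ^ 2) :=
          ENNReal.tsum_comp_le_tsum_of_injective Subtype.val_injective _
      _ ≤ ∑' x : ℤ, n * (locN T φ n x ω + locN T φ n (x + l) ω : ℝ≥0∞) :=
          ENNReal.tsum_le_tsum fun x => ofReal_sq_sub_locN_le T φ n ω x (x + l)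
      _ = ENNReal.ofReal (2 * n ^ 2) := by
          rw [ENNReal.tsum_mul_left, ENNReal.tsum_add, tsum_locN, tsum_locN_add_right]
          norm_cast
          ring
      _ ≤ ENNReal.ofReal (2 * n ^ 2 / M ^ 2 * maxSqBirkS T φ n ω) := by
          refine ENNReal.ofReal_le_ofReal ?_
          rw [div_mul_eq_mul_div, le_div_iff₀ (by positivity)]
          gcongr
      _ = _ := ENNReal.ofReal_mul (by positivity)

lemma tsum_compl_window_lintegral_sq_sub_locN_le [MeasurableSpace Ω] (μ : Measure Ω) (hM : 0 < M) :
    ∑' x : ↥(window M l : Set ℤ)ᶜ,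
        ∫⁻ ω, ENNReal.ofReal (((locN T φ n x ω : ℝ) - locN T φ n (x + l) ω) ^ 2) ∂μ
      ≤ ENNReal.ofReal (2 * n ^ 2 / M ^ 2) * ∫⁻ ω, ENNReal.ofReal (maxSqBirkS T φ n ω) ∂μ :=
  (tsum_lintegral_le_lintegral_tsum μ _).trans <|
    (lintegral_mono fun ω => tsum_compl_window_ofReal_sq_sub_locN_le T φ n l hM ω).trans_eq
      (lintegral_const_mul' _ _ ENNReal.ofReal_ne_top)

end Tail

lemma tendsto_div_ofReal_nhds_zero_of_le {α : Type*} {f : Filter α} {a : α → ℝ≥0∞}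
    {g h : α → ℝ} (hh : ∀ᶠ x in f, 0 < h x) (ha : ∀ᶠ x in f, a x ≤ ENNReal.ofReal (g x))
    (hg : Tendsto (fun x => g x / h x) f (𝓝 0)) :
    Tendsto (fun x => a x / ENNReal.ofReal (h x)) f (𝓝 0) := by
  have hg' := ENNReal.tendsto_ofReal hg
  rw [ENNReal.ofReal_zero] at hg'
  refine tendsto_of_tendsto_of_tendsto_of_le_of_le' tendsto_const_nhds hg'
    (Eventually.of_forall fun _ => zero_le) ?_
  filter_upwards [hh, ha] with x hx hax
  rw [ENNReal.ofReal_div_of_pos hx]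
  exact ENNReal.div_le_div_right hax _

noncomputable def threshold (n : ℕ) : ℕ := ⌈(n : ℝ) ^ ((7 : ℝ) / 8)⌉₊

lemma threshold_pos {n : ℕ} (hn : 1 ≤ n) : 0 < threshold n :=
  Nat.ceil_pos.mpr (Real.rpow_pos_of_pos (by exact_mod_cast hn) _)

lemma tendsto_threshold_div : Tendsto (fun n => (threshold n : ℝ) / n) atTop (𝓝 0) := by
  have hlim : Tendsto (fun n : ℕ => (n : ℝ) ^ (-(1 / 8 : ℝ)) + 1 / n) atTop (𝓝 0) := by
    simpa using ((tendsto_rpow_neg_atTop (by norm_num : (0 : ℝ) < 1 / 8)).comp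
      tendsto_natCast_atTop_atTop).add tendsto_one_div_atTop_nhds_zero_nat
  refine squeeze_zero' (Eventually.of_forall fun n => by positivity) ?_ hlim
  filter_upwards [eventually_gt_atTop 0] with n hn
  have hn : (0 : ℝ) < n := by exact_mod_cast hn
  calc (threshold n : ℝ) / n ≤ ((n : ℝ) ^ ((7 : ℝ) / 8) + 1) / n := by
        gcongr
        exact (Nat.ceil_lt_add_one (by positivity)).le
    _ = (n : ℝ) ^ (-(1 / 8 : ℝ)) + 1 / n := by
        rw [add_div, ← Real.rpow_sub_one hn.ne']
        norm_num

lemma tendsto_cube_mul_log_div_threshold_sq :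
    Tendsto (fun n : ℕ => (n : ℝ) ^ 3 * Real.log n / (threshold n : ℝ) ^ 2 / (n : ℝ) ^ ((3 : ℝ) / 2))
      atTop (𝓝 0) := by
  have hlim : Tendsto (fun n : ℕ => Real.log n / (n : ℝ) ^ (1 / 4 : ℝ)) atTop (𝓝 0) :=
    (isLittleO_log_rpow_atTop (by norm_num)).tendsto_div_nhds_zero.comp
      tendsto_natCast_atTop_atTop
  refine squeeze_zero' ?_ ?_ hlim
  · filter_upwards [eventually_ge_atTop 1] with n hn
    have : 0 ≤ Real.log n := Real.log_nonneg (by exact_mod_cast hn)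
    positivity
  filter_upwards [eventually_ge_atTop 1] with n hn
  have hn1 : (1 : ℝ) ≤ n := by exact_mod_cast hn
  have hn0 : (0 : ℝ) < n := by linarith
  have hM : (n : ℝ) ^ ((7 : ℝ) / 4) ≤ (threshold n : ℝ) ^ 2 := by
    calc (n : ℝ) ^ ((7 : ℝ) / 4) = ((n : ℝ) ^ ((7 : ℝ) / 8)) ^ 2 := by
          rw [← Real.rpow_natCast, ← Real.rpow_mul hn0.le]
          norm_num
      _ ≤ (threshold n : ℝ) ^ 2 := by
          gcongr
          exact Nat.le_ceil _
  have hpow : (n : ℝ) ^ ((7 : ℝ) / 4) * (n : ℝ) ^ ((3 : ℝ) / 2)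
      = (n : ℝ) ^ 3 * (n : ℝ) ^ (1 / 4 : ℝ) := by
    rw [← Real.rpow_add hn0, ← Real.rpow_natCast, ← Real.rpow_add hn0]
    norm_num
  have hlog : 0 ≤ Real.log n := Real.log_nonneg hn1
  calc (n : ℝ) ^ 3 * Real.log n / (threshold n : ℝ) ^ 2 / (n : ℝ) ^ ((3 : ℝ) / 2)
      ≤ (n : ℝ) ^ 3 * Real.log n / ((n : ℝ) ^ ((7 : ℝ) / 4) * (n : ℝ) ^ ((3 : ℝ) / 2)) := by
        rw [div_div]
        gcongr
    _ = Real.log n / (n : ℝ) ^ (1 / 4 : ℝ) := by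
        rw [hpow, mul_div_mul_left _ _ (by positivity)]

lemma tendsto_card_window_threshold_mul_div (l : ℤ) (C a : ℝ) :
    Tendsto (fun n : ℕ => #(window (threshold n) l) * (C * (n : ℝ) ^ ((1 : ℝ) / 2) * a)
      / (n : ℝ) ^ ((3 : ℝ) / 2)) atTop (𝓝 0) := by
  have hlim := ((tendsto_threshold_div.const_mul 2).add
    (tendsto_one_div_atTop_nhds_zero_nat.const_mul (2 * |(l : ℝ)| + 1))).const_mul (C * a)
  simp only [mul_zero, add_zero] at hlim
  refine hlim.congr' ?_
  filter_upwards [eventually_gt_atTop 0] with n hn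
  have hn : (0 : ℝ) < n := by exact_mod_cast hn
  have hpow : (n : ℝ) ^ ((3 : ℝ) / 2) = (n : ℝ) ^ ((1 : ℝ) / 2) * n := by
    rw [← Real.rpow_add_one hn.ne']
    norm_num
  rw [card_window, hpow]
  field_simp
  ring

lemma tendsto_sq_div_threshold_sq_mul_log_div (K : ℝ) :
    Tendsto (fun n : ℕ => 2 * (n : ℝ) ^ 2 / (threshold n : ℝ) ^ 2 * (K * n * Real.log n)
      / (n : ℝ) ^ ((3 : ℝ) / 2)) atTop (𝓝 0) := by
  simpa [mul_div_assoc] using (tendsto_cube_mul_log_div_threshold_sq.const_mul (2 * K)).congr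
    fun n => by ring

theorem stmt10_general {Ω : Type*} [MeasurableSpace Ω] (μ : Measure Ω)
    (T : Ω → Ω) (φ : Ω → ℤ) (C : ℝ)
    (hi : ∀ n : ℕ, 1 ≤ n → ∀ x y : ℤ,
      (∫⁻ ω, ENNReal.ofReal (((locN T φ n x ω : ℝ) - (locN T φ n y ω : ℝ)) ^ 2) ∂μ)
        ≤ ENNReal.ofReal (C * (n : ℝ) ^ ((1 : ℝ) / 2) * |(x : ℝ) - (y : ℝ)|))
    (K : ℝ)
    (hii : ∀ n : ℕ, 2 ≤ n →
      (∫⁻ ω, ENNReal.ofReal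
          ((Finset.range (n + 1)).sup' (Finset.nonempty_range_iff.mpr (Nat.succ_ne_zero n))
            (fun k => ((birkS T φ k ω : ℝ)) ^ 2)) ∂μ)
        ≤ ENNReal.ofReal (K * n * Real.log n)) :
    ∀ l : ℤ, Tendsto (fun n : ℕ =>
        (∑' x : ℤ, ∫⁻ ω,
            ENNReal.ofReal (((locN T φ n x ω : ℝ) - (locN T φ n (x + l) ω : ℝ)) ^ 2) ∂μ)
          / ENNReal.ofReal ((n : ℝ) ^ ((3 : ℝ) / 2)))
      atTop (nhds 0) := by
  intro l
  conv =>
    enter [1, n]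
    rw [← ENNReal.sum_add_tsum_compl (window (threshold n) l), ENNReal.add_div]
  have hpos : ∀ᶠ n : ℕ in atTop, 0 < (n : ℝ) ^ ((3 : ℝ) / 2) := by
    filter_upwards [eventually_gt_atTop 0] with n hn
    exact Real.rpow_pos_of_pos (by exact_mod_cast hn) _
  rw [← add_zero (0 : ℝ≥0∞)]
  refine (tendsto_div_ofReal_nhds_zero_of_le hpos ?_
    (tendsto_card_window_threshold_mul_div l C |(l : ℝ)|)).add
    (tendsto_div_ofReal_nhds_zero_of_le hpos ?_ (tendsto_sq_div_threshold_sq_mul_log_div K))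
  · filter_upwards [eventually_ge_atTop 1] with n hn
    calc _ ≤ #(window (threshold n) l) • ENNReal.ofReal (C * (n : ℝ) ^ ((1 : ℝ) / 2) * |(l : ℝ)|) :=
          sum_le_card_nsmul _ _ _ fun x _ => by simpa using hi n hn x (x + l)
      _ = _ := by rw [nsmul_eq_mul, ENNReal.ofReal_mul (Nat.cast_nonneg _), ENNReal.ofReal_natCast]
  · filter_upwards [eventually_ge_atTop 2] with n hn
    calc _ ≤ ENNReal.ofReal (2 * n ^ 2 / threshold n ^ 2) * ENNReal.ofReal (K * n * Real.log n) :=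
          (tsum_compl_window_lintegral_sq_sub_locN_le T φ n l μ (threshold_pos (by omega))).trans
            (by gcongr; exact hii n hn)
      _ = _ := (ENNReal.ofReal_mul (by positivity)).symm

/-- If `E_μ(|N_n(x) − N_n(y)|²) ≤ C n^{1/2} |x − y|` and
`E_μ(max_{0 ≤ k ≤ n} S_k²) ≤ K n log n`, then for every `l ∈ ℤ`,
`∑_{x ∈ ℤ} E_μ(|N_n(x) − N_n(x+l)|²) = o(n^{3/2})`. -/
theorem stmt10 {Ω : Type*} [MeasurableSpace Ω] (μ : Measure Ω) [IsProbabilityMeasure μ]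
    (T : Ω → Ω) (hT : MeasurePreserving T μ μ)
    (φ : Ω → ℤ) (hφ : Measurable φ)
    (C : ℝ) (hC : 0 < C)
    (hi : ∀ n : ℕ, 1 ≤ n → ∀ x y : ℤ,
      (∫⁻ ω, ENNReal.ofReal (((locN T φ n x ω : ℝ) - (locN T φ n y ω : ℝ)) ^ 2) ∂μ)
        ≤ ENNReal.ofReal (C * (n : ℝ) ^ ((1 : ℝ) / 2) * |(x : ℝ) - (y : ℝ)|))
    (K : ℝ) (hK : 0 < K)
    (hii : ∀ n : ℕ, 2 ≤ n →
      (∫⁻ ω, ENNReal.ofReal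
          ((Finset.range (n + 1)).sup' (Finset.nonempty_range_iff.mpr (Nat.succ_ne_zero n))
            (fun k => ((birkS T φ k ω : ℝ)) ^ 2)) ∂μ)
        ≤ ENNReal.ofReal (K * n * Real.log n)) :
    ∀ l : ℤ, Tendsto (fun n : ℕ =>
        (∑' x : ℤ, ∫⁻ ω,
            ENNReal.ofReal (((locN T φ n x ω : ℝ) - (locN T φ n (x + l) ω : ℝ)) ^ 2) ∂μ)
          / ENNReal.ofReal ((n : ℝ) ^ ((3 : ℝ) / 2)))
      atTop (nhds 0) :=
  stmt10_general μ T φ C hi K hii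
end
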